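/- arXiv:1508.03599 — 8 statements merged into one kernel-verified Lean document; each statement's English description precedes it below -/
import Mathlib

section
/- Let F̄ : [0, ∞) → [0, 1] be nonincreasing with F̄(0) = 1 (the tail distribution of an almost surely positive random variable X). If F̄ is log-concave on [0, ∞), then for every integer r ≥ 1, r · ∫_0^∞ F̄(x)^r dx ≤ (r+1) · ∫_0^∞ F̄(x)^{r+1} dx; that is, r · E[X_{1:r}] is nondecreasing in r, where X_{1:r} denotes the minimum of r i.i.d. copies of X. If F̄ is log-convex on [0, ∞), the reverse inequality holds for every r ≥ 1, i.e. r · E[X_{1:r}] is nonincreasing in r. -/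
open MeasureTheory
open scoped ENNReal

def LogConcaveOn (D : Set ℝ) (f : ℝ → ℝ) : Prop :=
  ∀ ⦃x⦄, x ∈ D → ∀ ⦃y⦄, y ∈ D → ∀ ⦃θ : ℝ⦄, θ ∈ Set.Icc (0 : ℝ) 1 →
    f x ^ θ * f y ^ (1 - θ) ≤ f (θ * x + (1 - θ) * y)

def LogConvexOn (D : Set ℝ) (f : ℝ → ℝ) : Prop :=
  ∀ ⦃x⦄, x ∈ D → ∀ ⦃y⦄, y ∈ D → ∀ ⦃θ : ℝ⦄, θ ∈ Set.Icc (0 : ℝ) 1 →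
    f (θ * x + (1 - θ) * y) ≤ f x ^ θ * f y ^ (1 - θ)

/-! Substituting `x = n y` gives `n ∫₀^∞ F̄(y)^n dy = ∫₀^∞ F̄(x/n)^n dx`, so it suffices to compare
the integrands `F̄(x/n)^n` pointwise. Log-concavity between the points `x/m` and `0`, with weight
`m/n` and `F̄(0) = 1`, gives `F̄(x/n) ≥ F̄(x/m)^{m/n}`, i.e. `F̄(x/n)^n ≥ F̄(x/m)^m` for `m ≤ n`;
log-convexity reverses it. -/

open Set

theorem setLIntegral_Ioi_comp_div (g : ℝ → ℝ≥0∞) {c : ℝ} (hc : 0 < c) :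
    ∫⁻ x in Ioi 0, g (x / c) = ENNReal.ofReal c * ∫⁻ x in Ioi 0, g x := by
  have hscale : MeasurePreserving (c⁻¹ * ·) volume (ENNReal.ofReal c • volume) :=
    ⟨measurable_const_mul _, by
      rw [Real.map_volume_mul_left (inv_ne_zero hc.ne'), inv_inv, abs_of_pos hc]⟩
  have hpre : (c⁻¹ * ·) ⁻¹' Ioi (0 : ℝ) = Ioi 0 := by
    rw [preimage_const_mul_Ioi₀ _ (inv_pos.2 hc), zero_div]
  have h := hscale.setLIntegral_comp_preimage_emb
    (measurableEmbedding_mulLeft₀ (inv_ne_zero hc.ne')) g (Ioi 0)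
  rw [hpre, Measure.restrict_smul, lintegral_smul_measure, smul_eq_mul] at h
  simpa only [div_eq_inv_mul] using h

theorem natCast_mul_setLIntegral_Ioi_pow_le {F : ℝ → ℝ} {m n : ℕ} (hm : m ≠ 0) (hn : n ≠ 0)
    (h : ∀ x > 0, F (x / m) ^ m ≤ F (x / n) ^ n) :
    (m : ℝ≥0∞) * ∫⁻ x in Ioi 0, ENNReal.ofReal (F x ^ m)
      ≤ n * ∫⁻ x in Ioi 0, ENNReal.ofReal (F x ^ n) := by
  have hscale (k : ℕ) (hk : k ≠ 0) : (k : ℝ≥0∞) * ∫⁻ x in Ioi 0, ENNReal.ofReal (F x ^ k)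
      = ∫⁻ x in Ioi 0, ENNReal.ofReal (F (x / k) ^ k) := by
    simpa only [ENNReal.ofReal_natCast] using (setLIntegral_Ioi_comp_div
      (fun x ↦ ENNReal.ofReal (F x ^ k)) (Nat.cast_pos.2 (Nat.pos_of_ne_zero hk))).symm
  rw [hscale m hm, hscale n hn]
  exact setLIntegral_mono' measurableSet_Ioi fun x hx ↦ ENNReal.ofReal_le_ofReal (h x hx)

theorem rpow_div_natCast_pow {a : ℝ} (ha : 0 ≤ a) (m : ℕ) {n : ℕ} (hn : n ≠ 0) :
    (a ^ ((m : ℝ) / n)) ^ n = a ^ m := by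
  rw [← Real.rpow_mul_natCast ha, div_mul_cancel₀ _ (Nat.cast_ne_zero.2 hn), Real.rpow_natCast]

theorem div_natCast_mem_Icc {m n : ℕ} (hmn : m ≤ n) : ((m : ℝ) / n) ∈ Icc (0 : ℝ) 1 :=
  ⟨by positivity, div_le_one_of_le₀ (Nat.cast_le.2 hmn) n.cast_nonneg⟩

theorem LogConcaveOn.rpow_le_apply_mul {f : ℝ → ℝ} (hf : LogConcaveOn (Ici 0) f) (h0 : f 0 = 1)
    {y : ℝ} (hy : 0 ≤ y) {θ : ℝ} (hθ : θ ∈ Icc (0 : ℝ) 1) : f y ^ θ ≤ f (θ * y) := by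
  simpa [h0] using hf hy self_mem_Ici hθ

theorem LogConvexOn.apply_mul_le_rpow {f : ℝ → ℝ} (hf : LogConvexOn (Ici 0) f) (h0 : f 0 = 1)
    {y : ℝ} (hy : 0 ≤ y) {θ : ℝ} (hθ : θ ∈ Icc (0 : ℝ) 1) : f (θ * y) ≤ f y ^ θ := by
  simpa [h0] using hf hy self_mem_Ici hθ

theorem LogConcaveOn.apply_div_pow_le {f : ℝ → ℝ} (hf : LogConcaveOn (Ici 0) f) (h0 : f 0 = 1)
    {x : ℝ} (hx : 0 ≤ x) {m n : ℕ} (hm : m ≠ 0) (hmn : m ≤ n) (hfx : 0 ≤ f (x / m)) :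
    f (x / m) ^ m ≤ f (x / n) ^ n := by
  have key := hf.rpow_le_apply_mul h0 (div_nonneg hx m.cast_nonneg) (div_natCast_mem_Icc hmn)
  rw [div_mul_div_cancel₀' (Nat.cast_ne_zero.2 hm)] at key
  calc f (x / m) ^ m = (f (x / m) ^ ((m : ℝ) / n)) ^ n :=
        (rpow_div_natCast_pow hfx m (by omega)).symm
    _ ≤ f (x / n) ^ n := pow_le_pow_left₀ (Real.rpow_nonneg hfx _) key n

theorem LogConvexOn.apply_div_pow_le {f : ℝ → ℝ} (hf : LogConvexOn (Ici 0) f) (h0 : f 0 = 1)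
    {x : ℝ} (hx : 0 ≤ x) {m n : ℕ} (hm : m ≠ 0) (hmn : m ≤ n) (hfx : 0 ≤ f (x / m))
    (hfx' : 0 ≤ f (x / n)) :
    f (x / n) ^ n ≤ f (x / m) ^ m := by
  have key := hf.apply_mul_le_rpow h0 (div_nonneg hx m.cast_nonneg) (div_natCast_mem_Icc hmn)
  rw [div_mul_div_cancel₀' (Nat.cast_ne_zero.2 hm)] at key
  calc f (x / n) ^ n ≤ (f (x / m) ^ ((m : ℝ) / n)) ^ n := pow_le_pow_left₀ hfx' key n
    _ = f (x / m) ^ m := rpow_div_natCast_pow hfx m (by omega)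

theorem r_expected_min_monotone_general (F : ℝ → ℝ)
    (hrange : ∀ x ≥ (0 : ℝ), F x ∈ Set.Icc (0 : ℝ) 1)
    (h0 : F 0 = 1) :
    (LogConcaveOn (Set.Ici 0) F →
      ∀ r : ℕ, 1 ≤ r →
        (r : ℝ≥0∞) * ∫⁻ x in Set.Ioi (0 : ℝ), ENNReal.ofReal (F x ^ r)
          ≤ ((r : ℝ≥0∞) + 1) * ∫⁻ x in Set.Ioi (0 : ℝ), ENNReal.ofReal (F x ^ (r + 1))) ∧
    (LogConvexOn (Set.Ici 0) F →
      ∀ r : ℕ, 1 ≤ r →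
        ((r : ℝ≥0∞) + 1) * ∫⁻ x in Set.Ioi (0 : ℝ), ENNReal.ofReal (F x ^ (r + 1))
          ≤ (r : ℝ≥0∞) * ∫⁻ x in Set.Ioi (0 : ℝ), ENNReal.ofReal (F x ^ r)) := by
  have hF (x : ℝ) (hx : 0 < x) (k : ℕ) : 0 ≤ F (x / k) := (hrange _ (by positivity)).1
  refine ⟨fun hconc r hr ↦ ?_, fun hconv r hr ↦ ?_⟩
  · rw [← Nat.cast_succ]
    exact natCast_mul_setLIntegral_Ioi_pow_le (by omega) r.succ_ne_zero fun x hx ↦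
      hconc.apply_div_pow_le h0 hx.le (by omega) r.le_succ (hF x hx r)
  · rw [← Nat.cast_succ]
    exact natCast_mul_setLIntegral_Ioi_pow_le r.succ_ne_zero (by omega) fun x hx ↦
      hconv.apply_div_pow_le h0 hx.le (by omega) r.le_succ (hF x hx r) (hF x hx _)

/-- For a tail distribution `F̄` (nonincreasing on `[0,∞)`, `F̄(0) = 1`):
if `F̄` is log-concave then `r ↦ r·E[X_{1:r}] = r·∫_0^∞ F̄(x)^r dx` is nondecreasing in `r`,
and if `F̄` is log-convex then it is nonincreasing in `r`. -/
theorem r_expected_min_monotone (F : ℝ → ℝ)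
    (hrange : ∀ x ≥ (0 : ℝ), F x ∈ Set.Icc (0 : ℝ) 1)
    (hmono : AntitoneOn F (Set.Ici 0)) (h0 : F 0 = 1) :
    (LogConcaveOn (Set.Ici 0) F →
      ∀ r : ℕ, 1 ≤ r →
        (r : ℝ≥0∞) * ∫⁻ x in Set.Ioi (0 : ℝ), ENNReal.ofReal (F x ^ r)
          ≤ ((r : ℝ≥0∞) + 1) * ∫⁻ x in Set.Ioi (0 : ℝ), ENNReal.ofReal (F x ^ (r + 1))) ∧
    (LogConvexOn (Set.Ici 0) F →
      ∀ r : ℕ, 1 ≤ r →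
        ((r : ℝ≥0∞) + 1) * ∫⁻ x in Set.Ioi (0 : ℝ), ENNReal.ofReal (F x ^ (r + 1))
          ≤ (r : ℝ≥0∞) * ∫⁻ x in Set.Ioi (0 : ℝ), ENNReal.ofReal (F x ^ r)) :=
  r_expected_min_monotone_general F hrange h0
end

section
/- Let F̄ : ℝ → (0, 1] be nonincreasing with F̄(x) = 1 for all x ≤ 0, and suppose F̄ is log-concave on [0, ∞). Fix an integer r ≥ 1 and real numbers 0 = t_1 ≤ t_2 ≤ … ≤ t_r, and set t_{r+1} = ∞. Define the expected computing cost E[C] = Σ_{u=1}^{r} u · ∫_{t_u}^{t_{u+1}} Π_{i=1}^{u} F̄(s − t_i) ds. Then ∫_0^∞ F̄(x) dx ≤ E[C] ≤ r · ∫_0^∞ F̄(x)^r dx. -/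
/-!
On the stage `(t_u, t_{u+1}]` exactly `u` copies run, and the substitution
`x = u s - (t_1 + ⋯ + t_u)` maps the stages onto consecutive intervals tiling `(0, ∞)`, with
Jacobian `u`; this turns `∫₀^∞ H` into the cost functional with integrand `H(u s - t_1 - ⋯ - t_u)`
for any `H`. Since `log F̄` is concave on `[0, ∞)` and vanishes at `0`, it is subadditive, so
`∏_{i ≤ u} F̄(s - t_i) ≥ F̄(x)`: this is the lower bound. Jensen's inequality for `log F̄` at the
`u` points `s - t_i`, padded with `r - u` zeros, gives `∏_{i ≤ u} F̄(s - t_i) ≤ F̄(x / r)^r`, and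
`∫₀^∞ F̄(x / r)^r dx = r ∫₀^∞ F̄^r`: this is the upper bound.
-/

open MeasureTheory
open scoped ENNReal

namespace LogConcaveOn

variable {D : Set ℝ} {f : ℝ → ℝ}

theorem concaveOn_log (hlc : LogConcaveOn D f) (hD : Convex ℝ D) (hf : ∀ x ∈ D, 0 < f x) :
    ConcaveOn ℝ D fun x => Real.log (f x) := by
  refine ⟨hD, fun x hx y hy a b ha hb hab => ?_⟩
  obtain rfl : b = 1 - a := by linarith
  have hfx := hf x hx
  have hfy := hf y hy
  calc a • Real.log (f x) + (1 - a) • Real.log (f y)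
      = Real.log (f x ^ a * f y ^ (1 - a)) := by
        rw [Real.log_mul (Real.rpow_pos_of_pos hfx _).ne' (Real.rpow_pos_of_pos hfy _).ne',
          Real.log_rpow hfx, Real.log_rpow hfy, smul_eq_mul, smul_eq_mul]
    _ ≤ Real.log (f (a • x + (1 - a) • y)) :=
        Real.log_le_log (by positivity) (hlc hx hy ⟨ha, by linarith⟩)

theorem prod_le_pow_mean (hlc : LogConcaveOn D f) (hD : Convex ℝ D) (hf : ∀ x ∈ D, 0 < f x)
    {ι : Type*} {A : Finset ι} (hA : A.Nonempty) {a : ι → ℝ} (ha : ∀ i ∈ A, a i ∈ D) :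
    ∏ i ∈ A, f (a i) ≤ f ((∑ i ∈ A, a i) / A.card) ^ A.card := by
  have hn : (0 : ℝ) < A.card := by exact_mod_cast hA.card_pos
  have hmean : (∑ i ∈ A, a i) / A.card ∈ D := by
    simpa [← Finset.sum_div, div_eq_inv_mul, Finset.mul_sum] using
      hD.sum_mem (t := A) (w := fun _ => (A.card : ℝ)⁻¹) (fun _ _ => by positivity)
        (by simp [hn.ne']) ha
  have jensen := (hlc.concaveOn_log hD hf).le_map_sum (t := A) (w := fun _ => (A.card : ℝ)⁻¹)
    (fun _ _ => by positivity) (by simp [hn.ne']) ha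
  simp only [smul_eq_mul, ← Finset.mul_sum] at jensen
  rw [← Real.log_le_log_iff (Finset.prod_pos fun i hi => hf _ (ha i hi))
    (pow_pos (hf _ hmean) _), Real.log_prod fun i hi => (hf _ (ha i hi)).ne', Real.log_pow,
    div_eq_inv_mul]
  rwa [inv_mul_le_iff₀ hn] at jensen

theorem map_add_le_mul (hlc : LogConcaveOn (Set.Ici 0) f) (hpos : ∀ x ∈ Set.Ici 0, 0 < f x)
    (hf0 : f 0 = 1) {a b : ℝ} (ha : 0 ≤ a) (hb : 0 ≤ b) :
    f (a + b) ≤ f a * f b := by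
  rcases (add_nonneg ha hb).eq_or_lt with hab | hab
  · obtain ⟨rfl, rfl⟩ : a = 0 ∧ b = 0 := ⟨by linarith, by linarith⟩
    simp [hf0]
  -- interpolate between `a + b` and `0`, where `f = 1`
  set θ := a / (a + b) with hθ_def
  have hθ : θ ∈ Set.Icc (0 : ℝ) 1 := ⟨by positivity, div_le_one_of_le₀ (by linarith) hab.le⟩
  have hθa : θ * (a + b) + (1 - θ) * 0 = a := by rw [hθ_def]; field_simp; ring
  have hθb : θ * 0 + (1 - θ) * (a + b) = b := by rw [hθ_def]; field_simp; ring
  have hfa := hlc hab.le Set.self_mem_Ici hθ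
  have hfb := hlc Set.self_mem_Ici hab.le hθ
  rw [hθa, hf0, Real.one_rpow, mul_one] at hfa
  rw [hθb, hf0, Real.one_rpow, one_mul] at hfb
  calc f (a + b) = f (a + b) ^ θ * f (a + b) ^ (1 - θ) := by
        rw [← Real.rpow_add (hpos _ hab.le), add_sub_cancel, Real.rpow_one]
    _ ≤ f a * f b := mul_le_mul hfa hfb (Real.rpow_nonneg (hpos _ hab.le).le _) (hpos a ha).le

theorem map_sum_le_prod (hlc : LogConcaveOn (Set.Ici 0) f) (hpos : ∀ x ∈ Set.Ici 0, 0 < f x)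
    (hf0 : f 0 = 1) {ι : Type*} (A : Finset ι) {a : ι → ℝ} (ha : ∀ i ∈ A, 0 ≤ a i) :
    f (∑ i ∈ A, a i) ≤ ∏ i ∈ A, f (a i) := by
  classical
  induction A using Finset.induction_on with
  | empty => simp [hf0]
  | insert j A hj ih =>
    rw [Finset.sum_insert hj, Finset.prod_insert hj]
    have ha' : ∀ i ∈ A, 0 ≤ a i := fun i hi => ha i (Finset.mem_insert_of_mem hi)
    calc f (a j + ∑ i ∈ A, a i)
        ≤ f (a j) * f (∑ i ∈ A, a i) :=
          hlc.map_add_le_mul hpos hf0 (ha j (Finset.mem_insert_self j A))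
            (Finset.sum_nonneg ha')
      _ ≤ f (a j) * ∏ i ∈ A, f (a i) :=
          mul_le_mul_of_nonneg_left (ih ha') (hpos _ (ha j (Finset.mem_insert_self j A))).le

theorem prod_le_pow_mean_of_subset (hlc : LogConcaveOn (Set.Ici 0) f)
    (hpos : ∀ x ∈ Set.Ici 0, 0 < f x) (hf0 : f 0 = 1) {ι : Type*} {A B : Finset ι}
    (hAB : A ⊆ B) (hB : B.Nonempty) {a : ι → ℝ} (ha : ∀ i ∈ A, 0 ≤ a i) :
    ∏ i ∈ A, f (a i) ≤ f ((∑ i ∈ A, a i) / B.card) ^ B.card := by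
  classical
  set b : ι → ℝ := fun i => if i ∈ A then a i else 0
  have hb : ∀ i ∈ B, 0 ≤ b i := fun i _ => by
    by_cases hi : i ∈ A <;> simp [b, hi, ha]
  have hprod : ∏ i ∈ A, f (a i) = ∏ i ∈ B, f (b i) :=
    Finset.prod_subset_one_on_sdiff hAB (fun i hi => by simp [b, (Finset.mem_sdiff.1 hi).2, hf0])
      (fun i hi => by simp [b, hi])
  have hsum : ∑ i ∈ A, a i = ∑ i ∈ B, b i :=
    Finset.sum_subset_zero_on_sdiff hAB (fun i hi => by simp [b, (Finset.mem_sdiff.1 hi).2])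
      (fun i hi => by simp [b, hi])
  rw [hprod, hsum]
  exact hlc.prod_le_pow_mean (convex_Ici 0) hpos hB hb

end LogConcaveOn

theorem Set.image_affine_Ioi {K : Type*} [DivisionSemiring K] [PartialOrder K]
    [PosMulReflectLT K] [IsOrderedCancelAddMonoid K] [ExistsAddOfLE K] {k : K} (hk : 0 < k)
    (d a : K) : (k * · + d) '' Set.Ioi a = Set.Ioi (k * a + d) := by
  rw [← Set.image_add_const_Ioi, ← Set.image_mul_left_Ioi hk, Set.image_image]

theorem lintegral_image_mul_sub (g : ℝ → ℝ≥0∞) {k : ℝ} (hk : 0 < k) (d : ℝ) {S : Set ℝ}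
    (hS : MeasurableSet S) :
    ∫⁻ x in (k * · - d) '' S, g x = ENNReal.ofReal k * ∫⁻ s in S, g (k * s - d) := by
  have hderiv (x : ℝ) : HasDerivAt (k * · - d) k x := by
    simpa using ((hasDerivAt_id x).const_mul k).sub_const d
  rw [lintegral_image_eq_lintegral_abs_deriv_mul hS (fun x _ => (hderiv x).hasDerivWithinAt)
    (fun x _ y _ h => mul_left_cancel₀ hk.ne' (sub_left_injective h)), abs_of_pos hk,
    lintegral_const_mul' _ _ ENNReal.ofReal_ne_top]

theorem setLIntegral_Ioc_mul_sub (g : ℝ → ℝ≥0∞) {k : ℝ} (hk : 0 < k) (d a b : ℝ) :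
    ∫⁻ x in Set.Ioc (k * a - d) (k * b - d), g x
      = ENNReal.ofReal k * ∫⁻ s in Set.Ioc a b, g (k * s - d) := by
  rw [← lintegral_image_mul_sub g hk d measurableSet_Ioc]
  simp_rw [sub_eq_add_neg, Set.image_affine_Ioc hk]

theorem setLIntegral_Ioi_mul_sub (g : ℝ → ℝ≥0∞) {k : ℝ} (hk : 0 < k) (d a : ℝ) :
    ∫⁻ x in Set.Ioi (k * a - d), g x = ENNReal.ofReal k * ∫⁻ s in Set.Ioi a, g (k * s - d) := by
  rw [← lintegral_image_mul_sub g hk d measurableSet_Ioi]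
  simp_rw [sub_eq_add_neg, Set.image_affine_Ioi hk]

theorem lintegral_Ioi_eq_sum_Ioc_add_Ioi {α : Type*} [MeasurableSpace α] [TopologicalSpace α]
    [LinearOrder α] [OrderClosedTopology α] [OpensMeasurableSpace α] {μ : Measure α}
    (g : α → ℝ≥0∞) {c : ℕ → α} {m r : ℕ} (hmr : m ≤ r)
    (hc : ∀ u, m ≤ u → u < r → c u ≤ c (u + 1)) :
    ∫⁻ x in Set.Ioi (c m), g x ∂μ
      = (∑ u ∈ Finset.Ico m r, ∫⁻ x in Set.Ioc (c u) (c (u + 1)), g x ∂μ)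
        + ∫⁻ x in Set.Ioi (c r), g x ∂μ := by
  induction r, hmr using Nat.le_induction with
  | base => simp
  | succ n hmn ih =>
    rw [ih fun u hmu hun => hc u hmu (hun.trans n.lt_succ_self), Finset.sum_Ico_succ_top hmn,
      add_assoc, ← lintegral_union measurableSet_Ioi (Set.Ioc_disjoint_Ioi le_rfl),
      Set.Ioc_union_Ioi_eq_Ioi (hc n hmn n.lt_succ_self)]

/-- On the stage `(t u, t (u + 1)]` exactly `u` copies are running (`r` on the last stage
`(t r, ∞)`), so the cost accrues at `u` times the integrand; with `G u s = Pr(S > s)` this is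
`E[C]`. -/
noncomputable def stagedCost (r : ℕ) (t : ℕ → ℝ) (G : ℕ → ℝ → ℝ≥0∞) : ℝ≥0∞ :=
  (∑ u ∈ Finset.Ico 1 r, (u : ℝ≥0∞) * ∫⁻ s in Set.Ioc (t u) (t (u + 1)), G u s) +
    (r : ℝ≥0∞) * ∫⁻ s in Set.Ioi (t r), G r s

theorem stagedCost_mono {r : ℕ} {t : ℕ → ℝ} {G G' : ℕ → ℝ → ℝ≥0∞}
    (h : ∀ u ≤ r, ∀ s, t u < s → G u s ≤ G' u s) :
    stagedCost r t G ≤ stagedCost r t G' := by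
  unfold stagedCost
  gcongr (∑ u ∈ _, _ * ?_) + _ * ?_ with u hu
  · exact setLIntegral_mono' measurableSet_Ioc fun s hs =>
      h u (Finset.mem_Ico.1 hu).2.le s hs.1
  · exact setLIntegral_mono' measurableSet_Ioi fun s hs => h r le_rfl s hs

theorem stagedCost_comp_mul_sub_sum (H : ℝ → ℝ≥0∞) {r : ℕ} (hr : 1 ≤ r) {t : ℕ → ℝ}
    (ht : ∀ u, 1 ≤ u → u < r → t u ≤ t (u + 1)) :
    stagedCost r t (fun u s => H (u * s - ∑ i ∈ Finset.Icc 1 u, t i)) =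
      ∫⁻ x in Set.Ioi 0, H x := by
  set c : ℕ → ℝ := fun u => u * t u - ∑ i ∈ Finset.Icc 1 u, t i
  have hc_one : c 1 = 0 := by simp [c]
  have hc_succ (u : ℕ) : c (u + 1) = u * t (u + 1) - ∑ i ∈ Finset.Icc 1 u, t i := by
    simp only [c, Finset.sum_Icc_succ_top (Nat.le_add_left 1 u)]
    push_cast
    ring
  have hc_mono (u : ℕ) (hu : 1 ≤ u) (hur : u < r) : c u ≤ c (u + 1) := by
    rw [hc_succ]
    exact sub_le_sub_right (mul_le_mul_of_nonneg_left (ht u hu hur) u.cast_nonneg) _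
  rw [← hc_one, lintegral_Ioi_eq_sum_Ioc_add_Ioi H hr hc_mono, stagedCost]
  congr 1
  · refine Finset.sum_congr rfl fun u hu => ?_
    have hu : (0 : ℝ) < u := by exact_mod_cast (Finset.mem_Ico.1 hu).1
    rw [hc_succ, setLIntegral_Ioc_mul_sub H hu, ENNReal.ofReal_natCast]
  · rw [setLIntegral_Ioi_mul_sub H (by exact_mod_cast hr), ENNReal.ofReal_natCast]

theorem cost_bounds_logconcave_general (F : ℝ → ℝ)
    (hrange : ∀ x, F x ∈ Set.Ioc (0 : ℝ) 1)
    (hneg : ∀ x ≤ (0 : ℝ), F x = 1)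
    (hlc : LogConcaveOn (Set.Ici 0) F)
    (r : ℕ) (hr : 1 ≤ r) (t : ℕ → ℝ)
    (htmono : ∀ u v, 1 ≤ u → u ≤ v → v ≤ r → t u ≤ t v) :
    ∫⁻ x in Set.Ioi (0 : ℝ), ENNReal.ofReal (F x)
      ≤ (∑ u ∈ Finset.Ico 1 r, (u : ℝ≥0∞) *
            ∫⁻ s in Set.Ioc (t u) (t (u + 1)),
              ENNReal.ofReal (∏ i ∈ Finset.Icc 1 u, F (s - t i))) +
        (r : ℝ≥0∞) *
          ∫⁻ s in Set.Ioi (t r),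
            ENNReal.ofReal (∏ i ∈ Finset.Icc 1 r, F (s - t i)) ∧
    (∑ u ∈ Finset.Ico 1 r, (u : ℝ≥0∞) *
          ∫⁻ s in Set.Ioc (t u) (t (u + 1)),
            ENNReal.ofReal (∏ i ∈ Finset.Icc 1 u, F (s - t i))) +
      (r : ℝ≥0∞) *
        ∫⁻ s in Set.Ioi (t r),
          ENNReal.ofReal (∏ i ∈ Finset.Icc 1 r, F (s - t i))
      ≤ (r : ℝ≥0∞) * ∫⁻ x in Set.Ioi (0 : ℝ), ENNReal.ofReal (F x ^ r) := by
  have hpos : ∀ x ∈ Set.Ici (0 : ℝ), 0 < F x := fun x _ => (hrange x).1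
  have hF0 : F 0 = 1 := hneg 0 le_rfl
  have hr0 : (0 : ℝ) < r := by exact_mod_cast hr
  have hstep (u : ℕ) (hu : 1 ≤ u) (hur : u < r) : t u ≤ t (u + 1) :=
    htmono u (u + 1) hu u.le_succ hur
  have hgap {u : ℕ} (hur : u ≤ r) {s : ℝ} (hs : t u < s) :
      ∀ i ∈ Finset.Icc 1 u, 0 ≤ s - t i := fun i hi =>
    sub_nonneg.2 ((htmono i u (Finset.mem_Icc.1 hi).1 (Finset.mem_Icc.1 hi).2 hur).trans hs.le)
  have hsum (u : ℕ) (s : ℝ) :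
      ∑ i ∈ Finset.Icc 1 u, (s - t i) = u * s - ∑ i ∈ Finset.Icc 1 u, t i := by
    simp [Finset.sum_sub_distrib]
  have hscale : (r : ℝ≥0∞) * ∫⁻ x in Set.Ioi 0, ENNReal.ofReal (F x ^ r)
      = ∫⁻ x in Set.Ioi 0, ENNReal.ofReal (F (x / r) ^ r) := by
    simpa [hr0.ne'] using
      (setLIntegral_Ioi_mul_sub (fun x => ENNReal.ofReal (F (x / r) ^ r)) hr0 0 0).symm
  change _ ≤ stagedCost r t (fun u s => ENNReal.ofReal (∏ i ∈ Finset.Icc 1 u, F (s - t i))) ∧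
    stagedCost r t _ ≤ _
  rw [hscale, ← stagedCost_comp_mul_sub_sum _ hr hstep,
    ← stagedCost_comp_mul_sub_sum _ hr hstep]
  refine ⟨stagedCost_mono fun u hur s hs => ?_, stagedCost_mono fun u hur s hs => ?_⟩
  · gcongr
    rw [← hsum]
    exact hlc.map_sum_le_prod hpos hF0 _ (hgap hur hs)
  · gcongr
    rw [← hsum]
    simpa using hlc.prod_le_pow_mean_of_subset hpos hF0 (Finset.Icc_subset_Icc_right hur)
      ⟨1, Finset.mem_Icc.2 ⟨le_rfl, hr⟩⟩ (hgap hur hs)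

/-- For a log-concave tail distribution `F̄ : ℝ → (0,1]` (with `F̄ ≡ 1` on `(-∞,0]`),
the expected computing cost
`E[C] = Σ_{u=1}^{r} u ∫_{t_u}^{t_{u+1}} Π_{i=1}^{u} F̄(s − t_i) ds` (with `t_{r+1} = ∞`)
satisfies `E[X] ≤ E[C] ≤ r E[X_{1:r}]`, i.e.
`∫_0^∞ F̄(x) dx ≤ E[C] ≤ r ∫_0^∞ F̄(x)^r dx`. -/
theorem cost_bounds_logconcave (F : ℝ → ℝ)
    (hrange : ∀ x, F x ∈ Set.Ioc (0 : ℝ) 1)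
    (hmono : Antitone F) (hneg : ∀ x ≤ (0 : ℝ), F x = 1)
    (hlc : LogConcaveOn (Set.Ici 0) F)
    (r : ℕ) (hr : 1 ≤ r) (t : ℕ → ℝ) (ht1 : t 1 = 0)
    (htmono : ∀ u v, 1 ≤ u → u ≤ v → v ≤ r → t u ≤ t v) :
    ∫⁻ x in Set.Ioi (0 : ℝ), ENNReal.ofReal (F x)
      ≤ (∑ u ∈ Finset.Ico 1 r, (u : ℝ≥0∞) *
            ∫⁻ s in Set.Ioc (t u) (t (u + 1)),
              ENNReal.ofReal (∏ i ∈ Finset.Icc 1 u, F (s - t i))) +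
        (r : ℝ≥0∞) *
          ∫⁻ s in Set.Ioi (t r),
            ENNReal.ofReal (∏ i ∈ Finset.Icc 1 r, F (s - t i)) ∧
    (∑ u ∈ Finset.Ico 1 r, (u : ℝ≥0∞) *
          ∫⁻ s in Set.Ioc (t u) (t (u + 1)),
            ENNReal.ofReal (∏ i ∈ Finset.Icc 1 u, F (s - t i))) +
      (r : ℝ≥0∞) *
        ∫⁻ s in Set.Ioi (t r),
          ENNReal.ofReal (∏ i ∈ Finset.Icc 1 r, F (s - t i))
      ≤ (r : ℝ≥0∞) * ∫⁻ x in Set.Ioi (0 : ℝ), ENNReal.ofReal (F x ^ r) :=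
  cost_bounds_logconcave_general F hrange hneg hlc r hr t htmono
end

section
/- Let F̄ : ℝ → (0, 1] be nonincreasing with F̄(x) = 1 for all x ≤ 0, and suppose F̄ is log-convex on [0, ∞). Fix an integer r ≥ 1 and real numbers 0 = t_1 ≤ t_2 ≤ … ≤ t_r, and set t_{r+1} = ∞. Define the expected computing cost E[C] = Σ_{u=1}^{r} u · ∫_{t_u}^{t_{u+1}} Π_{i=1}^{u} F̄(s − t_i) ds. Then r · ∫_0^∞ F̄(x)^r dx ≤ E[C] ≤ ∫_0^∞ F̄(x) dx. -/
/-!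
On the stage `(t_u, t_{u+1}]`, where `u` copies are running, substitute
`w = ∑_{i ≤ u} (s - t_i)`, the computing cost of a job finishing at time `s`. The stages are mapped
onto consecutive intervals exhausting `(0, ∞)`, `u ds` becomes `dw`, and the integrand becomes
`∏ F̄(x_i)` with `x_i ≥ 0` and `∑ x_i = w`. As `log F̄` is convex on `[0, ∞)` and vanishes at `0`,
it is superadditive, whence `∏ F̄(x_i) ≤ F̄(w)`; Jensen's inequality followed by
`log F̄(θ y) ≤ θ log F̄(y)` for `θ = u / r` gives `F̄(w / r)^r ≤ ∏ F̄(x_i)`. Integrating over `w > 0`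
yields both bounds, the lower one after rescaling `w = r x`.
-/

open MeasureTheory
open scoped ENNReal

open Set Finset

theorem LogConvexOn.convexOn_log {D : Set ℝ} {f : ℝ → ℝ} (hf : LogConvexOn D f)
    (hD : Convex ℝ D) (hpos : ∀ x ∈ D, 0 < f x) : ConvexOn ℝ D fun x => Real.log (f x) := by
  refine ⟨hD, fun x hx y hy a b ha hb hab => ?_⟩
  obtain rfl : b = 1 - a := by linarith
  have hfx := hpos x hx
  have hfy := hpos y hy
  calc Real.log (f (a • x + (1 - a) • y))
      ≤ Real.log (f x ^ a * f y ^ (1 - a)) :=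
        Real.log_le_log (hpos _ (hD hx hy ha hb (by ring))) (hf hx hy ⟨ha, by linarith⟩)
    _ = a • Real.log (f x) + (1 - a) • Real.log (f y) := by
        rw [Real.log_mul (by positivity) (by positivity), Real.log_rpow hfx, Real.log_rpow hfy,
          smul_eq_mul, smul_eq_mul]

section ConvexOnIci

variable {g : ℝ → ℝ}

theorem ConvexOn.map_mul_le_mul (hg : ConvexOn ℝ (Ici 0) g) (hg0 : g 0 ≤ 0) {x θ : ℝ}
    (hx : 0 ≤ x) (hθ0 : 0 ≤ θ) (hθ1 : θ ≤ 1) : g (θ * x) ≤ θ * g x := by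
  have h := hg.2 (mem_Ici.2 hx) self_mem_Ici hθ0 (sub_nonneg.2 hθ1) (add_sub_cancel θ 1)
  simp only [smul_eq_mul, mul_zero, add_zero] at h
  linarith [mul_nonpos_of_nonneg_of_nonpos (sub_nonneg.2 hθ1) hg0]

theorem ConvexOn.sum_map_le_map_sum (hg : ConvexOn ℝ (Ici 0) g) (hg0 : g 0 = 0) {ι : Type*}
    (s : Finset ι) {x : ι → ℝ} (hx : ∀ i ∈ s, 0 ≤ x i) :
    ∑ i ∈ s, g (x i) ≤ g (∑ i ∈ s, x i) := by
  set w := ∑ i ∈ s, x i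
  rcases (sum_nonneg hx).eq_or_lt with hw | hw
  · have hx0 : ∀ i ∈ s, x i = 0 := (sum_eq_zero_iff_of_nonneg hx).1 hw.symm
    rw [show w = 0 from hw.symm, hg0, sum_eq_zero fun i hi => by rw [hx0 i hi, hg0]]
  calc ∑ i ∈ s, g (x i) = ∑ i ∈ s, g (x i / w * w) := by
        refine sum_congr rfl fun i _ => ?_
        rw [div_mul_cancel₀ _ hw.ne']
    _ ≤ ∑ i ∈ s, x i / w * g w := sum_le_sum fun i hi =>
        hg.map_mul_le_mul hg0.le hw.le (div_nonneg (hx i hi) hw.le)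
          (div_le_one_of_le₀ (single_le_sum hx hi) hw.le)
    _ = g w := by rw [← sum_mul, ← sum_div, div_self hw.ne', one_mul]

theorem ConvexOn.mul_map_div_le_sum (hg : ConvexOn ℝ (Ici 0) g) (hg0 : g 0 ≤ 0) {ι : Type*}
    {s : Finset ι} (hs : s.Nonempty) {n : ℕ} (hn : #s ≤ n) {x : ι → ℝ}
    (hx : ∀ i ∈ s, 0 ≤ x i) :
    n * g ((∑ i ∈ s, x i) / n) ≤ ∑ i ∈ s, g (x i) := by
  set w := ∑ i ∈ s, x i
  have hk : (0 : ℝ) < #s := by exact_mod_cast hs.card_pos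
  have hkn : (#s : ℝ) ≤ n := by exact_mod_cast hn
  have hn0 : (0 : ℝ) < n := hk.trans_le hkn
  have hjensen : #s * g (w / #s) ≤ ∑ i ∈ s, g (x i) := by
    have h := hg.map_sum_le (t := s) (w := fun _ => (#s : ℝ)⁻¹) (p := x)
      (fun _ _ => by positivity) (by simp [hk.ne']) hx
    rw [← le_div_iff₀' hk]
    simpa [← mul_sum, div_eq_inv_mul] using h
  have hscale : g (#s / n * (w / #s)) ≤ #s / n * g (w / #s) :=
    hg.map_mul_le_mul hg0 (div_nonneg (sum_nonneg hx) hk.le) (by positivity)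
      (div_le_one_of_le₀ hkn hn0.le)
  rw [div_mul_div_cancel₀' hk.ne'] at hscale
  calc n * g (w / n) ≤ n * (#s / n * g (w / #s)) := mul_le_mul_of_nonneg_left hscale hn0.le
    _ = #s * g (w / #s) := by field_simp
    _ ≤ ∑ i ∈ s, g (x i) := hjensen

end ConvexOnIci

namespace LogConvexOn

variable {F : ℝ → ℝ} {ι : Type*} {s : Finset ι} {x : ι → ℝ}

theorem prod_le_map_sum (hF : LogConvexOn (Ici 0) F) (hpos : ∀ x, 0 ≤ x → 0 < F x)
    (hF0 : F 0 = 1) (hx : ∀ i ∈ s, 0 ≤ x i) : ∏ i ∈ s, F (x i) ≤ F (∑ i ∈ s, x i) := by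
  have hlog := (hF.convexOn_log (convex_Ici 0) hpos).sum_map_le_map_sum (by simp [hF0]) s hx
  rw [← Real.log_prod fun i hi => (hpos _ (hx i hi)).ne'] at hlog
  exact (Real.log_le_log_iff (prod_pos fun i hi => hpos _ (hx i hi))
    (hpos _ (sum_nonneg hx))).1 hlog

theorem map_div_pow_le_prod (hF : LogConvexOn (Ici 0) F) (hpos : ∀ x, 0 ≤ x → 0 < F x)
    (hF0 : F 0 = 1) (hs : s.Nonempty) {n : ℕ} (hn : #s ≤ n) (hx : ∀ i ∈ s, 0 ≤ x i) :
    F ((∑ i ∈ s, x i) / n) ^ n ≤ ∏ i ∈ s, F (x i) := by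
  have hlog := (hF.convexOn_log (convex_Ici 0) hpos).mul_map_div_le_sum (by simp [hF0]) hs hn hx
  rw [← Real.log_pow, ← Real.log_prod fun i hi => (hpos _ (hx i hi)).ne'] at hlog
  exact (Real.log_le_log_iff (pow_pos (hpos _ (div_nonneg (sum_nonneg hx) n.cast_nonneg)) n)
    (prod_pos fun i hi => hpos _ (hx i hi))).1 hlog

end LogConvexOn

theorem Set.image_affine_Ioi_s6 {c : ℝ} (hc : 0 < c) (d a : ℝ) :
    (c * · + d) '' Ioi a = Ioi (c * a + d) := by
  rw [← image_image (· + d) (c * ·), image_mul_left_Ioi hc, image_add_const_Ioi]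

theorem lintegral_image_affine {c : ℝ} (hc : 0 < c) (d : ℝ) {A : Set ℝ} (hA : MeasurableSet A)
    (f : ℝ → ℝ≥0∞) :
    ∫⁻ w in (c * · + d) '' A, f w = ENNReal.ofReal c * ∫⁻ s in A, f (c * s + d) := by
  have hderiv (s : ℝ) : HasDerivWithinAt (c * · + d) c A s := by
    simpa using ((hasDerivAt_id s).const_mul c).add_const d |>.hasDerivWithinAt
  have hinj : Function.Injective (c * · + d) := fun a b hab => by
    simpa [hc.ne'] using hab
  rw [lintegral_image_eq_lintegral_abs_deriv_mul hA (fun s _ => hderiv s) hinj.injOn,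
    abs_of_pos hc, lintegral_const_mul' _ _ ENNReal.ofReal_ne_top]

theorem lintegral_Ioi_comp_div {c : ℝ} (hc : 0 < c) (f : ℝ → ℝ≥0∞) :
    ∫⁻ w in Ioi 0, f (w / c) = ENNReal.ofReal c * ∫⁻ x in Ioi 0, f x := by
  have h := lintegral_image_affine hc 0 (measurableSet_Ioi (a := 0)) fun w => f (w / c)
  rw [image_affine_Ioi_s6 hc] at h
  simpa [hc.ne'] using h

theorem lintegral_Ioi_eq_sum_Ioc_add_Ioi_s6 (μ : Measure ℝ) (f : ℝ → ℝ≥0∞) (W : ℕ → ℝ) {m n : ℕ}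
    (hmn : m ≤ n) (hW : ∀ k, m ≤ k → k < n → W k ≤ W (k + 1)) :
    ∫⁻ x in Ioi (W m), f x ∂μ =
      ∑ k ∈ Ico m n, ∫⁻ x in Ioc (W k) (W (k + 1)), f x ∂μ + ∫⁻ x in Ioi (W n), f x ∂μ := by
  induction n, hmn using Nat.le_induction with
  | base => simp
  | succ n hmn ih =>
    have hsplit : ∫⁻ x in Ioi (W n), f x ∂μ =
        ∫⁻ x in Ioc (W n) (W (n + 1)), f x ∂μ + ∫⁻ x in Ioi (W (n + 1)), f x ∂μ := by
      rw [← Ioc_union_Ioi_eq_Ioi (hW n hmn (lt_add_one n)),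
        lintegral_union measurableSet_Ioi (Ioc_disjoint_Ioi le_rfl)]
    rw [ih fun k hk hkn => hW k hk (by omega), hsplit, sum_Ico_succ_top hmn, add_assoc]

def workload (t : ℕ → ℝ) (u : ℕ) (s : ℝ) : ℝ :=
  ∑ i ∈ Finset.Icc 1 u, (s - t i)

section workload

variable (t : ℕ → ℝ) {u : ℕ}

theorem workload_eq_affine (u : ℕ) :
    workload t u = fun s => (u : ℝ) * s + -∑ i ∈ Finset.Icc 1 u, t i := by
  ext s
  simp only [workload, sum_sub_distrib, sum_const, Nat.card_Icc, add_tsub_cancel_right, nsmul_eq_mul]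
  ring

theorem workload_one_self : workload t 1 (t 1) = 0 := by
  simp [workload]

theorem workload_succ_self : workload t (u + 1) (t (u + 1)) = workload t u (t (u + 1)) := by
  unfold workload
  rw [sum_Icc_succ_top (Nat.le_add_left 1 u), sub_self, add_zero]

theorem workload_mono (u : ℕ) : Monotone (workload t u) := fun _ _ hab =>
  sum_le_sum fun _ _ => sub_le_sub_right hab _

theorem image_workload_Ioc (hu : 1 ≤ u) (a b : ℝ) :
    workload t u '' Ioc a b = Ioc (workload t u a) (workload t u b) := by
  rw [workload_eq_affine]
  exact image_affine_Ioc (by positivity) _ _ _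

theorem image_workload_Ioi (hu : 1 ≤ u) (a : ℝ) :
    workload t u '' Ioi a = Ioi (workload t u a) := by
  rw [workload_eq_affine]
  exact image_affine_Ioi_s6 (by positivity) _ _

theorem lintegral_comp_workload (hu : 1 ≤ u) (h : ℝ → ℝ≥0∞) {A : Set ℝ} (hA : MeasurableSet A) :
    (u : ℝ≥0∞) * ∫⁻ s in A, h (workload t u s) = ∫⁻ w in workload t u '' A, h w := by
  rw [workload_eq_affine, lintegral_image_affine (by positivity) _ hA, ENNReal.ofReal_natCast]

end workload

noncomputable def costIntegral (t : ℕ → ℝ) (r : ℕ) (g : ℕ → ℝ → ℝ≥0∞) : ℝ≥0∞ :=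
  (∑ u ∈ Finset.Ico 1 r, (u : ℝ≥0∞) * ∫⁻ s in Set.Ioc (t u) (t (u + 1)), g u s) +
    (r : ℝ≥0∞) * ∫⁻ s in Set.Ioi (t r), g r s

theorem costIntegral_mono {t : ℕ → ℝ} {r : ℕ} {g h : ℕ → ℝ → ℝ≥0∞}
    (hgh : ∀ u, 1 ≤ u → u ≤ r → ∀ s, t u < s → g u s ≤ h u s) :
    costIntegral t r g ≤ costIntegral t r h := by
  rcases r.eq_zero_or_pos with rfl | hr
  · simp [costIntegral]
  refine add_le_add (sum_le_sum fun u hu => mul_le_mul_right ?_ _) (mul_le_mul_right ?_ _)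
  · exact setLIntegral_mono' measurableSet_Ioc fun s hs =>
      hgh u (mem_Ico.1 hu).1 (mem_Ico.1 hu).2.le s hs.1
  · exact setLIntegral_mono' measurableSet_Ioi fun s hs => hgh r hr le_rfl s hs

theorem costIntegral_comp_workload {t : ℕ → ℝ} {r : ℕ} (hr : 1 ≤ r)
    (ht : MonotoneOn t (Set.Icc 1 r)) (h : ℝ → ℝ≥0∞) :
    costIntegral t r (fun u s => h (workload t u s)) = ∫⁻ w in Ioi 0, h w := by
  set W : ℕ → ℝ := fun u => workload t u (t u)
  have hW : ∀ u, 1 ≤ u → u < r → W u ≤ W (u + 1) := fun u hu hur => by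
    simp only [W, workload_succ_self]
    exact workload_mono t u (ht ⟨hu, hur.le⟩ ⟨hu.trans u.le_succ, hur⟩ u.le_succ)
  calc costIntegral t r (fun u s => h (workload t u s))
      = (∑ u ∈ Ico 1 r, ∫⁻ w in Ioc (W u) (W (u + 1)), h w) + ∫⁻ w in Ioi (W r), h w := by
        unfold costIntegral
        congr 1
        · refine sum_congr rfl fun u hu => ?_
          rw [lintegral_comp_workload t (mem_Ico.1 hu).1 h measurableSet_Ioc,
            image_workload_Ioc t (mem_Ico.1 hu).1]
          simp only [W, workload_succ_self]
        · rw [lintegral_comp_workload t hr h measurableSet_Ioi, image_workload_Ioi t hr]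
    _ = ∫⁻ w in Ioi (W 1), h w := (lintegral_Ioi_eq_sum_Ioc_add_Ioi_s6 volume h W hr hW).symm
    _ = ∫⁻ w in Ioi 0, h w := by simp only [W, workload_one_self]

theorem cost_bounds_logconvex_general (F : ℝ → ℝ)
    (hrange : ∀ x, F x ∈ Set.Ioc (0 : ℝ) 1)
    (hneg : ∀ x ≤ (0 : ℝ), F x = 1)
    (hlc : LogConvexOn (Set.Ici 0) F)
    (r : ℕ) (t : ℕ → ℝ)
    (htmono : ∀ u v, 1 ≤ u → u ≤ v → v ≤ r → t u ≤ t v) :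
    (r : ℝ≥0∞) * ∫⁻ x in Set.Ioi (0 : ℝ), ENNReal.ofReal (F x ^ r)
      ≤ (∑ u ∈ Finset.Ico 1 r, (u : ℝ≥0∞) *
            ∫⁻ s in Set.Ioc (t u) (t (u + 1)),
              ENNReal.ofReal (∏ i ∈ Finset.Icc 1 u, F (s - t i))) +
        (r : ℝ≥0∞) *
          ∫⁻ s in Set.Ioi (t r),
            ENNReal.ofReal (∏ i ∈ Finset.Icc 1 r, F (s - t i)) ∧
    (∑ u ∈ Finset.Ico 1 r, (u : ℝ≥0∞) *
          ∫⁻ s in Set.Ioc (t u) (t (u + 1)),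
            ENNReal.ofReal (∏ i ∈ Finset.Icc 1 u, F (s - t i))) +
      (r : ℝ≥0∞) *
        ∫⁻ s in Set.Ioi (t r),
          ENNReal.ofReal (∏ i ∈ Finset.Icc 1 r, F (s - t i))
      ≤ ∫⁻ x in Set.Ioi (0 : ℝ), ENNReal.ofReal (F x) := by
  rcases r.eq_zero_or_pos with rfl | hr
  · simp
  have hpos : ∀ x, 0 ≤ x → 0 < F x := fun x _ => (hrange x).1
  have hF0 : F 0 = 1 := hneg 0 le_rfl
  have ht : MonotoneOn t (Set.Icc 1 r) := fun u hu v hv huv => htmono u v hu.1 huv hv.2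
  have helapsed : ∀ u ≤ r, ∀ s, t u < s → ∀ i ∈ Finset.Icc 1 u, 0 ≤ s - t i := fun u hur s hs i hi =>
    sub_nonneg.2 ((htmono i u (mem_Icc.1 hi).1 (mem_Icc.1 hi).2 hur).trans hs.le)
  change _ ≤ costIntegral t r (fun u s => ENNReal.ofReal (∏ i ∈ Finset.Icc 1 u, F (s - t i))) ∧
    costIntegral t r (fun u s => ENNReal.ofReal (∏ i ∈ Finset.Icc 1 u, F (s - t i))) ≤ _
  constructor
  · calc (r : ℝ≥0∞) * ∫⁻ x in Ioi 0, ENNReal.ofReal (F x ^ r)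
        = ∫⁻ w in Ioi 0, ENNReal.ofReal (F (w / r) ^ r) := by
          rw [← ENNReal.ofReal_natCast]
          exact (lintegral_Ioi_comp_div (by positivity) _).symm
      _ = costIntegral t r fun u s => ENNReal.ofReal (F (workload t u s / r) ^ r) :=
          (costIntegral_comp_workload hr ht _).symm
      _ ≤ _ := costIntegral_mono fun u hu hur s hs => ENNReal.ofReal_le_ofReal <|
          hlc.map_div_pow_le_prod hpos hF0 (nonempty_Icc.2 hu) (by simpa using hur)
            (helapsed u hur s hs)
  · calc _ ≤ costIntegral t r fun u s => ENNReal.ofReal (F (workload t u s)) :=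
          costIntegral_mono fun u _ hur s hs => ENNReal.ofReal_le_ofReal <|
            hlc.prod_le_map_sum hpos hF0 (helapsed u hur s hs)
      _ = _ := costIntegral_comp_workload hr ht fun w => ENNReal.ofReal (F w)

/-- For a log-convex tail distribution `F̄ : ℝ → (0,1]` (with `F̄ ≡ 1` on `(-∞,0]`),
the expected computing cost
`E[C] = Σ_{u=1}^{r} u ∫_{t_u}^{t_{u+1}} Π_{i=1}^{u} F̄(s − t_i) ds` (with `t_{r+1} = ∞`)
satisfies `r E[X_{1:r}] ≤ E[C] ≤ E[X]`, i.e.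
`r ∫_0^∞ F̄(x)^r dx ≤ E[C] ≤ ∫_0^∞ F̄(x) dx`. -/
theorem cost_bounds_logconvex (F : ℝ → ℝ)
    (hrange : ∀ x, F x ∈ Set.Ioc (0 : ℝ) 1)
    (hmono : Antitone F) (hneg : ∀ x ≤ (0 : ℝ), F x = 1)
    (hlc : LogConvexOn (Set.Ici 0) F)
    (r : ℕ) (hr : 1 ≤ r) (t : ℕ → ℝ) (ht1 : t 1 = 0)
    (htmono : ∀ u v, 1 ≤ u → u ≤ v → v ≤ r → t u ≤ t v) :
    (r : ℝ≥0∞) * ∫⁻ x in Set.Ioi (0 : ℝ), ENNReal.ofReal (F x ^ r)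
      ≤ (∑ u ∈ Finset.Ico 1 r, (u : ℝ≥0∞) *
            ∫⁻ s in Set.Ioc (t u) (t (u + 1)),
              ENNReal.ofReal (∏ i ∈ Finset.Icc 1 u, F (s - t i))) +
        (r : ℝ≥0∞) *
          ∫⁻ s in Set.Ioi (t r),
            ENNReal.ofReal (∏ i ∈ Finset.Icc 1 r, F (s - t i)) ∧
    (∑ u ∈ Finset.Ico 1 r, (u : ℝ≥0∞) *
          ∫⁻ s in Set.Ioc (t u) (t (u + 1)),
            ENNReal.ofReal (∏ i ∈ Finset.Icc 1 u, F (s - t i))) +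
      (r : ℝ≥0∞) *
        ∫⁻ s in Set.Ioi (t r),
          ENNReal.ofReal (∏ i ∈ Finset.Icc 1 r, F (s - t i))
      ≤ ∫⁻ x in Set.Ioi (0 : ℝ), ENNReal.ofReal (F x) :=
  cost_bounds_logconvex_general F hrange hneg hlc r t htmono
end

section
/- Let F̄ : ℝ → (0, 1] be nonincreasing with F̄(x) = 1 for all x ≤ 0, and suppose F̄ is log-concave on [0, ∞). Then for every integer u ≥ 2, all real numbers t_1 ≤ t_2 ≤ … ≤ t_u, and every x ≥ 0, Π_{i=1}^{u} F̄(x/u + t_u − t_i) ≥ Π_{i=1}^{u−1} F̄(x/(u−1) + t_u − t_i). If instead F̄ is log-convex on [0, ∞), the inequality is reversed. -/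
open Finset

namespace LogConcaveOn

variable {D : Set ℝ} {F : ℝ → ℝ}

lemma mul_le_map_mul_map (hF : LogConcaveOn D F) (hF0 : ∀ x, 0 ≤ F x) {x y θ : ℝ}
    (hx : x ∈ D) (hy : y ∈ D) (hθ : θ ∈ Set.Icc (0 : ℝ) 1) :
    F x * F y ≤ F (θ * x + (1 - θ) * y) * F ((1 - θ) * x + θ * y) := by
  have hθ' : 1 - θ ∈ Set.Icc (0 : ℝ) 1 := ⟨by linarith [hθ.2], by linarith [hθ.1]⟩
  have h₁ := hF hx hy hθ
  have h₂ := hF hx hy hθ'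
  rw [sub_sub_cancel] at h₂
  calc F x * F y = F x ^ θ * F y ^ (1 - θ) * (F x ^ (1 - θ) * F y ^ θ) := by
        rw [mul_mul_mul_comm, ← Real.rpow_add' (hF0 x) (by norm_num), mul_comm (F y ^ _),
          ← Real.rpow_add' (hF0 y) (by norm_num)]
        norm_num
    _ ≤ _ := mul_le_mul h₁ h₂
        (mul_nonneg (Real.rpow_nonneg (hF0 x) _) (Real.rpow_nonneg (hF0 y) _)) (hF0 _)

lemma map_add_mul_le (hF : LogConcaveOn D F) (hF0 : ∀ x, 0 ≤ F x) {a b δ : ℝ}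
    (hb : b ∈ D) (haδ : a + δ ∈ D) (hba : b ≤ a) (hδ : 0 ≤ δ) :
    F (a + δ) * F b ≤ F a * F (b + δ) := by
  rcases hδ.eq_or_lt with rfl | hδ
  · simp
  -- `b + δ` and `a` lie at fractions `θ` and `1 - θ` of the way from `b` to `a + δ`
  have hs : 0 < a + δ - b := by linarith
  set θ := δ / (a + δ - b)
  have hθ : θ ∈ Set.Icc (0 : ℝ) 1 := ⟨by positivity, (div_le_one hs).2 (by linarith)⟩
  have hθs : θ * (a + δ - b) = δ := div_mul_cancel₀ δ hs.ne'
  have := hF.mul_le_map_mul_map hF0 haδ hb hθ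
  rwa [show θ * (a + δ) + (1 - θ) * b = b + δ by linarith,
    show (1 - θ) * (a + δ) + θ * b = a by linarith, mul_comm (F (b + δ))] at this

lemma map_zero_mul_prod_add_le (hF : LogConcaveOn (Set.Ici 0) F) (hF0 : ∀ x, 0 ≤ F x)
    {ι : Type*} (s : Finset ι) (a : ι → ℝ) {δ : ℝ} (hδ : 0 ≤ δ)
    (ha : ∀ i ∈ s, #s * δ ≤ a i) :
    F 0 * ∏ i ∈ s, F (a i + δ) ≤ F (#s * δ) * ∏ i ∈ s, F (a i) := by
  classical
  induction s using Finset.induction_on with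
  | empty => simp
  | insert j s hj ih =>
    rw [card_insert_of_notMem hj] at ha ⊢
    rw [prod_insert hj, prod_insert hj]
    push_cast at ha ⊢
    have hsδ : 0 ≤ (#s : ℝ) * δ := by positivity
    have hsj : #s * δ ≤ a j := by linarith [ha j (mem_insert_self j s)]
    have ih := ih fun i hi => by linarith [ha i (mem_insert_of_mem hi)]
    have hpair := hF.map_add_mul_le hF0 (Set.mem_Ici.2 hsδ)
      (Set.mem_Ici.2 (by linarith)) hsj hδ
    calc F 0 * (F (a j + δ) * ∏ i ∈ s, F (a i + δ))
        = F (a j + δ) * (F 0 * ∏ i ∈ s, F (a i + δ)) := by ring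
      _ ≤ F (a j + δ) * (F (#s * δ) * ∏ i ∈ s, F (a i)) := by gcongr; exact hF0 _
      _ = F (a j + δ) * F (#s * δ) * ∏ i ∈ s, F (a i) := by ring
      _ ≤ F (a j) * F (#s * δ + δ) * ∏ i ∈ s, F (a i) := by
        gcongr
        exact prod_nonneg fun i _ => hF0 _
      _ = F ((#s + 1) * δ) * (F (a j) * ∏ i ∈ s, F (a i)) := by ring_nf

end LogConcaveOn

lemma LogConvexOn.logConcaveOn_inv {D : Set ℝ} {F : ℝ → ℝ} (hF : LogConvexOn D F)
    (hF0 : ∀ x, 0 < F x) : LogConcaveOn D F⁻¹ := by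
  intro x hx y hy θ hθ
  simp only [Pi.inv_apply]
  rw [Real.inv_rpow (hF0 x).le, Real.inv_rpow (hF0 y).le, ← mul_inv]
  exact inv_anti₀ (hF0 _) (hF hx hy hθ)

lemma LogConcaveOn.prod_tail_shift_le {F : ℝ → ℝ} (hF : LogConcaveOn (Set.Ici 0) F)
    (hF0 : ∀ x, 0 ≤ F x) (hF1 : F 0 = 1) {u : ℕ} (hu : 2 ≤ u) {t : ℕ → ℝ}
    (ht : ∀ i ∈ Icc 1 u, t i ≤ t u) {x : ℝ} (hx : 0 ≤ x) :
    ∏ i ∈ Icc 1 (u - 1), F (x / (u - 1 : ℝ) + t u - t i)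
      ≤ ∏ i ∈ Icc 1 u, F (x / (u : ℝ) + t u - t i) := by
  obtain ⟨v, rfl⟩ : ∃ v, u = v + 1 := ⟨u - 1, by omega⟩
  have hv : (0 : ℝ) < v := by exact_mod_cast (by omega : 0 < v)
  set δ := x / ((v + 1) * v) with hδ
  have hvδ : v * δ = x / (v + 1) := by rw [hδ]; field_simp
  have hshift : ∀ i, x / (v + 1) + t (v + 1) - t i + δ = x / v + t (v + 1) - t i := by
    intro i; rw [hδ]; field_simp; ring
  have key := hF.map_zero_mul_prod_add_le hF0 (Icc 1 v) (fun i => x / (v + 1) + t (v + 1) - t i)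
    (δ := δ) (by positivity) fun i hi => by
      have := ht i (Icc_subset_Icc_right (by omega) hi)
      simp only [Nat.card_Icc, add_tsub_cancel_right, hvδ]
      linarith
  simp only [hF1, one_mul, hshift, Nat.card_Icc, add_tsub_cancel_right, hvδ] at key
  rw [prod_Icc_succ_top (by omega), add_sub_cancel_right, mul_comm]
  push_cast
  simpa using key

theorem prod_tail_shift_ineq_general (F : ℝ → ℝ)
    (hrange : ∀ x, F x ∈ Set.Ioc (0 : ℝ) 1)
    (hneg : ∀ x ≤ (0 : ℝ), F x = 1) :
    (LogConcaveOn (Set.Ici 0) F →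
      ∀ u : ℕ, 2 ≤ u → ∀ t : ℕ → ℝ,
        (∀ i j, 1 ≤ i → i ≤ j → j ≤ u → t i ≤ t j) → ∀ x ≥ (0 : ℝ),
        ∏ i ∈ Finset.Icc 1 (u - 1), F (x / (u - 1 : ℝ) + t u - t i)
          ≤ ∏ i ∈ Finset.Icc 1 u, F (x / (u : ℝ) + t u - t i)) ∧
    (LogConvexOn (Set.Ici 0) F →
      ∀ u : ℕ, 2 ≤ u → ∀ t : ℕ → ℝ,
        (∀ i j, 1 ≤ i → i ≤ j → j ≤ u → t i ≤ t j) → ∀ x ≥ (0 : ℝ),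
        ∏ i ∈ Finset.Icc 1 u, F (x / (u : ℝ) + t u - t i)
          ≤ ∏ i ∈ Finset.Icc 1 (u - 1), F (x / (u - 1 : ℝ) + t u - t i)) := by
  have hpos x : 0 < F x := (hrange x).1
  have hF1 : F 0 = 1 := hneg 0 le_rfl
  have htop {u : ℕ} {t : ℕ → ℝ} (ht : ∀ i j, 1 ≤ i → i ≤ j → j ≤ u → t i ≤ t j) :
      ∀ i ∈ Icc 1 u, t i ≤ t u := fun i hi => ht i u (mem_Icc.1 hi).1 (mem_Icc.1 hi).2 le_rfl
  refine ⟨fun hF u hu t ht x hx => hF.prod_tail_shift_le (fun y => (hpos y).le) hF1 hu (htop ht) hx,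
    fun hF u hu t ht x hx => ?_⟩
  have := (hF.logConcaveOn_inv hpos).prod_tail_shift_le (fun y => (inv_pos.2 (hpos y)).le)
    (by simp [hF1]) hu (htop ht) hx
  simp only [Pi.inv_apply, prod_inv_distrib] at this
  exact (inv_le_inv₀ (prod_pos fun i _ => hpos _) (prod_pos fun i _ => hpos _)).1 this

/-- For a tail distribution `F̄ : ℝ → (0,1]` (with `F̄ ≡ 1` on `(-∞,0]`), log-concavity on
`[0,∞)` implies, for every `u ≥ 2`, `t_1 ≤ … ≤ t_u` and `x ≥ 0`,
`Π_{i=1}^{u} F̄(x/u + t_u − t_i) ≥ Π_{i=1}^{u−1} F̄(x/(u−1) + t_u − t_i)`;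
log-convexity implies the reverse inequality. -/
theorem prod_tail_shift_ineq (F : ℝ → ℝ)
    (hrange : ∀ x, F x ∈ Set.Ioc (0 : ℝ) 1)
    (hmono : Antitone F) (hneg : ∀ x ≤ (0 : ℝ), F x = 1) :
    (LogConcaveOn (Set.Ici 0) F →
      ∀ u : ℕ, 2 ≤ u → ∀ t : ℕ → ℝ,
        (∀ i j, 1 ≤ i → i ≤ j → j ≤ u → t i ≤ t j) → ∀ x ≥ (0 : ℝ),
        ∏ i ∈ Finset.Icc 1 (u - 1), F (x / (u - 1 : ℝ) + t u - t i)
          ≤ ∏ i ∈ Finset.Icc 1 u, F (x / (u : ℝ) + t u - t i)) ∧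
    (LogConvexOn (Set.Ici 0) F →
      ∀ u : ℕ, 2 ≤ u → ∀ t : ℕ → ℝ,
        (∀ i j, 1 ≤ i → i ≤ j → j ≤ u → t i ≤ t j) → ∀ x ≥ (0 : ℝ),
        ∏ i ∈ Finset.Icc 1 u, F (x / (u : ℝ) + t u - t i)
          ≤ ∏ i ∈ Finset.Icc 1 (u - 1), F (x / (u - 1 : ℝ) + t u - t i)) :=
  prod_tail_shift_ineq_general F hrange hneg
end

section
/- Let F̄ : [0, ∞) → [0, 1] be log-concave on [0, ∞). Then for all integers u ≥ 2 and r ≥ 1, all real numbers t_1 ≤ t_2 ≤ … ≤ t_u, and every x ≥ 0, Π_{i=1}^{u} F̄((x + u(t_u − t_i))/r)^{r/u} ≤ Π_{i=1}^{u−1} F̄((x + (u−1)(t_u − t_i))/r)^{r/(u−1)}. If instead F̄ is log-convex on [0, ∞), the inequality is reversed. -/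
open Finset

lemma Finset.prod_rpow_mul_rpow_eq_prod_rpow {ι : Type*} {s : Finset ι} (hs : s.Nonempty)
    {m : ℝ} (hm : (#s : ℝ) = m - 1) {a : ι → ℝ} (ha : ∀ i ∈ s, 0 ≤ a i) {c : ℝ} (hc : 0 ≤ c)
    (p : ℝ) :
    (∏ i ∈ s, a i ^ (p / m)) * c ^ (p / m)
      = ∏ i ∈ s, (a i ^ ((m - 1) / m) * c ^ (1 / m)) ^ (p / (m - 1)) := by
  have hm1 : m - 1 ≠ 0 := by rw [← hm]; exact_mod_cast hs.card_pos.ne'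
  have hm0 : m ≠ 0 := by
    have : (0 : ℝ) < #s := by exact_mod_cast hs.card_pos
    linarith
  have hterm : ∀ i ∈ s, (a i ^ ((m - 1) / m) * c ^ (1 / m)) ^ (p / (m - 1))
      = a i ^ (p / m) * c ^ (p / (m * (m - 1))) := by
    intro i hi
    rw [Real.mul_rpow (by positivity [ha i hi]) (by positivity), ← Real.rpow_mul (ha i hi),
      ← Real.rpow_mul hc]
    congr 2 <;> field_simp
  rw [prod_congr rfl hterm, prod_mul_distrib, prod_const, ← Real.rpow_natCast,
    ← Real.rpow_mul hc, hm]
  congr 2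
  field_simp

lemma sub_one_div_self_mem_Icc {u : ℝ} (hu : 1 ≤ u) : (u - 1) / u ∈ Set.Icc (0 : ℝ) 1 :=
  ⟨div_nonneg (by linarith) (by linarith), (div_le_one (by linarith)).2 (by linarith)⟩

lemma add_sub_one_mul_div_eq_convex_comb (x s r : ℝ) {u : ℝ} (hu : u ≠ 0) :
    (x + (u - 1) * s) / r = (u - 1) / u * ((x + u * s) / r) + (1 - (u - 1) / u) * (x / r) := by
  field_simp
  ring

lemma add_mul_sub_div_nonneg {x c a b r : ℝ} (hx : 0 ≤ x) (hc : 0 ≤ c) (hab : a ≤ b) (hr : 0 ≤ r) :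
    0 ≤ (x + c * (b - a)) / r :=
  div_nonneg (add_nonneg hx (mul_nonneg hc (sub_nonneg.2 hab))) hr

section TailProduct

variable {F : ℝ → ℝ} {u : ℕ} {r x : ℝ} {t : ℕ → ℝ}

lemma prod_tail_rpow_eq (hF0 : ∀ y ≥ 0, 0 ≤ F y) (hu : 2 ≤ u) (hr : 0 ≤ r)
    (ht : ∀ i ∈ Icc 1 (u - 1), t i ≤ t u) (hx : 0 ≤ x) :
    ∏ i ∈ Icc 1 u, F ((x + u * (t u - t i)) / r) ^ (r / u)
      = ∏ i ∈ Icc 1 (u - 1), (F ((x + u * (t u - t i)) / r) ^ (((u : ℝ) - 1) / u)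
          * F (x / r) ^ (1 - ((u : ℝ) - 1) / u)) ^ (r / ((u : ℝ) - 1)) := by
  have hsplit : Icc 1 u = insert u (Icc 1 (u - 1)) := by
    ext; simp only [mem_Icc, mem_insert]; omega
  have hcard : (#(Icc 1 (u - 1)) : ℝ) = u - 1 := by
    rw [Nat.card_Icc, Nat.add_sub_cancel, Nat.cast_pred (by omega)]
  have hu0 : (u : ℝ) ≠ 0 := by positivity
  rw [hsplit, prod_insert (by simp; omega), mul_comm, sub_self, mul_zero, add_zero,
    prod_rpow_mul_rpow_eq_prod_rpow (nonempty_Icc.2 (by omega)) hcard _ (hF0 _ (by positivity)),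
    one_sub_div hu0, sub_sub_cancel]
  exact fun i hi ↦ hF0 _ (add_mul_sub_div_nonneg hx (Nat.cast_nonneg u) (ht i hi) hr)

lemma LogConcaveOn.prod_tail_rpow_le (hF : LogConcaveOn (Set.Ici 0) F) (hF0 : ∀ y ≥ 0, 0 ≤ F y)
    (hu : 2 ≤ u) (hr : 0 ≤ r) (ht : ∀ i ∈ Icc 1 (u - 1), t i ≤ t u) (hx : 0 ≤ x) :
    ∏ i ∈ Icc 1 u, F ((x + u * (t u - t i)) / r) ^ (r / u)
      ≤ ∏ i ∈ Icc 1 (u - 1), F ((x + ((u : ℝ) - 1) * (t u - t i)) / r) ^ (r / ((u : ℝ) - 1)) := by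
  have hu1 : (1 : ℝ) ≤ u := by norm_cast; omega
  rw [prod_tail_rpow_eq hF0 hu hr ht hx]
  refine prod_le_prod (fun i hi ↦ ?_) (fun i hi ↦ ?_)
  all_goals
    have hy := add_mul_sub_div_nonneg hx (Nat.cast_nonneg u) (ht i hi) hr
    have hz : 0 ≤ x / r := div_nonneg hx hr
    have hmean := mul_nonneg (Real.rpow_nonneg (hF0 _ hy) (((u : ℝ) - 1) / u))
      (Real.rpow_nonneg (hF0 _ hz) (1 - ((u : ℝ) - 1) / u))
  · exact Real.rpow_nonneg hmean _
  · rw [add_sub_one_mul_div_eq_convex_comb x _ r (by positivity : (u : ℝ) ≠ 0)]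
    exact Real.rpow_le_rpow hmean (hF hy hz (sub_one_div_self_mem_Icc hu1))
      (div_nonneg hr (by linarith))

lemma LogConvexOn.prod_tail_rpow_le (hF : LogConvexOn (Set.Ici 0) F) (hF0 : ∀ y ≥ 0, 0 ≤ F y)
    (hu : 2 ≤ u) (hr : 0 ≤ r) (ht : ∀ i ∈ Icc 1 (u - 1), t i ≤ t u) (hx : 0 ≤ x) :
    ∏ i ∈ Icc 1 (u - 1), F ((x + ((u : ℝ) - 1) * (t u - t i)) / r) ^ (r / ((u : ℝ) - 1))
      ≤ ∏ i ∈ Icc 1 u, F ((x + u * (t u - t i)) / r) ^ (r / u) := by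
  have hu1 : (1 : ℝ) ≤ u := by norm_cast; omega
  rw [prod_tail_rpow_eq hF0 hu hr ht hx]
  refine prod_le_prod (fun i hi ↦ ?_) (fun i hi ↦ ?_)
  all_goals
    have hy := add_mul_sub_div_nonneg hx (Nat.cast_nonneg u) (ht i hi) hr
    have hz : 0 ≤ x / r := div_nonneg hx hr
    have hmid := hF0 _ (add_mul_sub_div_nonneg hx (by linarith : (0 : ℝ) ≤ u - 1) (ht i hi) hr)
  · exact Real.rpow_nonneg hmid _
  · refine Real.rpow_le_rpow hmid ?_ (div_nonneg hr (by linarith))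
    rw [add_sub_one_mul_div_eq_convex_comb x _ r (by positivity : (u : ℝ) ≠ 0)]
    exact hF hy hz (sub_one_div_self_mem_Icc hu1)

end TailProduct

/-- For a tail distribution `F̄ : [0,∞) → [0,1]`, log-concavity implies, for all `u ≥ 2`,
`r ≥ 1`, `t_1 ≤ … ≤ t_u` and `x ≥ 0`,
`Π_{i=1}^{u} F̄((x + u(t_u − t_i))/r)^{r/u} ≤ Π_{i=1}^{u−1} F̄((x + (u−1)(t_u − t_i))/r)^{r/(u−1)}`;
log-convexity implies the reverse inequality. -/
theorem prod_tail_rpow_ineq (F : ℝ → ℝ)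
    (hrange : ∀ x ≥ (0 : ℝ), F x ∈ Set.Icc (0 : ℝ) 1) :
    (LogConcaveOn (Set.Ici 0) F →
      ∀ u : ℕ, 2 ≤ u → ∀ r : ℕ, 1 ≤ r → ∀ t : ℕ → ℝ,
        (∀ i j, 1 ≤ i → i ≤ j → j ≤ u → t i ≤ t j) → ∀ x ≥ (0 : ℝ),
        ∏ i ∈ Finset.Icc 1 u,
            F ((x + (u : ℝ) * (t u - t i)) / (r : ℝ)) ^ ((r : ℝ) / (u : ℝ))
          ≤ ∏ i ∈ Finset.Icc 1 (u - 1),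
              F ((x + ((u : ℝ) - 1) * (t u - t i)) / (r : ℝ)) ^ ((r : ℝ) / ((u : ℝ) - 1))) ∧
    (LogConvexOn (Set.Ici 0) F →
      ∀ u : ℕ, 2 ≤ u → ∀ r : ℕ, 1 ≤ r → ∀ t : ℕ → ℝ,
        (∀ i j, 1 ≤ i → i ≤ j → j ≤ u → t i ≤ t j) → ∀ x ≥ (0 : ℝ),
        ∏ i ∈ Finset.Icc 1 (u - 1),
            F ((x + ((u : ℝ) - 1) * (t u - t i)) / (r : ℝ)) ^ ((r : ℝ) / ((u : ℝ) - 1))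
          ≤ ∏ i ∈ Finset.Icc 1 u,
              F ((x + (u : ℝ) * (t u - t i)) / (r : ℝ)) ^ ((r : ℝ) / (u : ℝ))) := by
  have hF0 : ∀ y ≥ 0, 0 ≤ F y := fun y hy ↦ (hrange y hy).1
  have hle_top : ∀ {u : ℕ} {t : ℕ → ℝ}, (∀ i j, 1 ≤ i → i ≤ j → j ≤ u → t i ≤ t j) →
      ∀ i ∈ Icc 1 (u - 1), t i ≤ t u := fun ht i hi ↦
    ht i _ (mem_Icc.1 hi).1 ((mem_Icc.1 hi).2.trans (Nat.sub_le _ 1)) le_rfl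
  exact ⟨fun hF u hu r _ t ht x hx ↦
      hF.prod_tail_rpow_le hF0 hu r.cast_nonneg (hle_top ht) hx,
    fun hF u hu r _ t ht x hx ↦ hF.prod_tail_rpow_le hF0 hu r.cast_nonneg (hle_top ht) hx⟩
end

section
/- Let F̄ : [0, ∞) → [0, 1] be nonincreasing with ∫_0^∞ F̄(s) ds < ∞ (the tail distribution of a nonnegative random variable X with finite mean). If F̄ is log-concave on [0, ∞), then the mean residual life m(t) = (∫_t^∞ F̄(s) ds) / F̄(t) is nonincreasing in t on the set {t ≥ 0 : F̄(t) > 0}. If F̄ is log-convex on [0, ∞), then m(t) is nondecreasing in t on that set. -/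
open MeasureTheory

private lemma mrl_key_combo {a b s : ℝ} (hab : a ≤ b) (hs : 0 ≤ s)
    (hd : 0 < b + s - a) :
    (s / (b + s - a)) ∈ Set.Icc (0:ℝ) 1 ∧
    (s / (b + s - a)) * (b + s) + (1 - s / (b + s - a)) * a = a + s ∧
    (1 - s / (b + s - a)) * (b + s) + (1 - (1 - s / (b + s - a))) * a = b := by
  set θ := s / (b + s - a) with hθdef
  have hθd : θ * (b + s - a) = s := div_mul_cancel₀ s (ne_of_gt hd)
  refine ⟨⟨div_nonneg hs hd.le, (div_le_one hd).2 (by linarith)⟩, by nlinarith, by nlinarith⟩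

private lemma mrl_key_concave (F : ℝ → ℝ) (h0 : ∀ x ≥ (0:ℝ), 0 ≤ F x)
    (hc : LogConcaveOn (Set.Ici 0) F) {a b s : ℝ} (ha : 0 ≤ a) (hab : a ≤ b) (hs : 0 ≤ s) :
    F (b + s) * F a ≤ F (a + s) * F b := by
  rcases eq_or_lt_of_le (show a ≤ b + s by linarith) with heq | hd
  · have hs0 : s = 0 := by linarith
    have hab0 : a = b := by linarith
    subst hs0; subst hab0; simp
  · have hd' : 0 < b + s - a := by linarith
    obtain ⟨hθmem, he1, he2⟩ := mrl_key_combo hab hs hd'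
    set θ := s / (b + s - a) with hθdef
    have hbs : b + s ∈ Set.Ici (0:ℝ) := by simp only [Set.mem_Ici]; linarith
    have haI : a ∈ Set.Ici (0:ℝ) := ha
    have hθmem' : (1 - θ) ∈ Set.Icc (0:ℝ) 1 := by
      constructor <;> [linarith [hθmem.2]; linarith [hθmem.1]]
    have h1 := hc hbs haI hθmem
    have h2 := hc hbs haI hθmem'
    rw [he1] at h1
    rw [he2] at h2
    by_cases hFa : F a = 0
    · rw [hFa, mul_zero]
      exact mul_nonneg (h0 _ (by linarith)) (h0 _ (by linarith))
    by_cases hFbs : F (b + s) = 0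
    · rw [hFbs, zero_mul]
      exact mul_nonneg (h0 _ (by linarith)) (h0 _ (by linarith))
    have hFa' : 0 < F a := lt_of_le_of_ne (h0 _ ha) (Ne.symm hFa)
    have hFbs' : 0 < F (b + s) := lt_of_le_of_ne (h0 _ (by linarith : (0:ℝ) ≤ b + s)) (Ne.symm hFbs)
    calc F (b + s) * F a
        = (F (b+s) ^ θ * F a ^ (1-θ)) * (F (b+s) ^ (1-θ) * F a ^ (1-(1-θ))) := by
          rw [show (1 - (1-θ)) = θ by ring]
          rw [show (F (b+s) ^ θ * F a ^ (1-θ)) * (F (b+s) ^ (1-θ) * F a ^ θ)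
              = (F (b+s) ^ θ * F (b+s) ^ (1-θ)) * (F a ^ (1-θ) * F a ^ θ) by ring]
          rw [← Real.rpow_add hFbs', ← Real.rpow_add hFa']
          norm_num
      _ ≤ F (a + s) * F b := by
          apply mul_le_mul h1 h2 (by positivity) (h0 _ (by linarith))

private lemma mrl_key_convex (F : ℝ → ℝ) (h0 : ∀ x ≥ (0:ℝ), 0 ≤ F x)
    (hmono : AntitoneOn F (Set.Ici 0))
    (hc : LogConvexOn (Set.Ici 0) F) {a b s : ℝ} (ha : 0 ≤ a) (hab : a ≤ b) (hs : 0 ≤ s) :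
    F (a + s) * F b ≤ F (b + s) * F a := by
  rcases eq_or_lt_of_le (show a ≤ b + s by linarith) with heq | hd
  · have hs0 : s = 0 := by linarith
    have hab0 : a = b := by linarith
    subst hs0; subst hab0; simp
  · have hd' : 0 < b + s - a := by linarith
    obtain ⟨hθmem, he1, he2⟩ := mrl_key_combo hab hs hd'
    set θ := s / (b + s - a) with hθdef
    have hbs : b + s ∈ Set.Ici (0:ℝ) := by simp only [Set.mem_Ici]; linarith
    have haI : a ∈ Set.Ici (0:ℝ) := ha
    have hθmem' : (1 - θ) ∈ Set.Icc (0:ℝ) 1 := by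
      constructor <;> [linarith [hθmem.2]; linarith [hθmem.1]]
    have h1 := hc hbs haI hθmem
    have h2 := hc hbs haI hθmem'
    rw [he1] at h1
    rw [he2] at h2
    by_cases hFa : F a = 0
    · have hFb : F b = 0 := le_antisymm
        (by simpa [hFa] using hmono ha (by simp only [Set.mem_Ici]; linarith) hab)
        (h0 _ (by linarith))
      rw [hFb, mul_zero]
      exact mul_nonneg (h0 _ (by linarith)) (h0 _ (by linarith))
    have hFa' : 0 < F a := lt_of_le_of_ne (h0 _ ha) (Ne.symm hFa)
    by_cases hFbs : F (b + s) = 0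
    · rcases eq_or_lt_of_le hs with hs0 | hspos
      · rw [← hs0]; simp; rw [mul_comm]
      · have hθpos : 0 < θ := div_pos hspos hd'
        have h3 : F (a + s) ≤ 0 := by
          rw [hFbs, Real.zero_rpow (ne_of_gt hθpos), zero_mul] at h1
          exact h1
        have h4 : F (a + s) = 0 := le_antisymm h3 (h0 _ (by linarith))
        rw [h4, zero_mul]
        exact mul_nonneg (h0 _ (by linarith)) (h0 _ ha)
    have hFbs' : 0 < F (b + s) := lt_of_le_of_ne (h0 _ (by linarith : (0:ℝ) ≤ b + s)) (Ne.symm hFbs)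
    calc F (a + s) * F b
        ≤ (F (b+s) ^ θ * F a ^ (1-θ)) * (F (b+s) ^ (1-θ) * F a ^ (1-(1-θ))) := by
          apply mul_le_mul h1 h2 (h0 _ (by linarith)) (by positivity)
      _ = F (b + s) * F a := by
          rw [show (1 - (1-θ)) = θ by ring]
          rw [show (F (b+s) ^ θ * F a ^ (1-θ)) * (F (b+s) ^ (1-θ) * F a ^ θ)
              = (F (b+s) ^ θ * F (b+s) ^ (1-θ)) * (F a ^ (1-θ) * F a ^ θ) by ring]
          rw [← Real.rpow_add hFbs', ← Real.rpow_add hFa']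
          norm_num

private lemma mrl_translate (F : ℝ → ℝ) {t₁ t₂ : ℝ} (hI1 : IntegrableOn F (Set.Ioi t₁)) :
    (∫ x in Set.Ioi t₂, F (x + -(t₂ - t₁))) = (∫ x in Set.Ioi t₁, F x) ∧
    IntegrableOn (fun x => F (x + -(t₂ - t₁))) (Set.Ioi t₂) := by
  have hmp := measurePreserving_add_right (volume : Measure ℝ) (-(t₂ - t₁))
  have hemb : MeasurableEmbedding (· + -(t₂ - t₁)) :=
    (MeasurableEquiv.addRight (-(t₂ - t₁))).measurableEmbedding
  have hpre : (· + -(t₂ - t₁)) ⁻¹' (Set.Ioi t₁) = Set.Ioi t₂ := by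
    ext x; simp only [Set.mem_preimage, Set.mem_Ioi]; constructor <;> intro h <;> linarith
  constructor
  · have := hmp.setIntegral_preimage_emb hemb F (Set.Ioi t₁)
    rwa [hpre] at this
  · have := (hmp.integrableOn_comp_preimage hemb (f := F) (s := Set.Ioi t₁)).2 hI1
    rwa [hpre] at this

/-- Mean residual life: for an integrable nonincreasing tail distribution `F̄` on `[0,∞)`,
log-concavity implies `m(t) = (∫_t^∞ F̄(s) ds)/F̄(t)` is nonincreasing on
`{t ≥ 0 : F̄(t) > 0}`, and log-convexity implies `m` is nondecreasing on that set. -/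
theorem mean_residual_life_monotone (F : ℝ → ℝ)
    (hrange : ∀ x ≥ (0 : ℝ), F x ∈ Set.Icc (0 : ℝ) 1)
    (hmono : AntitoneOn F (Set.Ici 0))
    (hint : IntegrableOn F (Set.Ioi 0)) :
    (LogConcaveOn (Set.Ici 0) F →
      ∀ t₁ t₂ : ℝ, 0 ≤ t₁ → t₁ ≤ t₂ → 0 < F t₁ → 0 < F t₂ →
        (∫ s in Set.Ioi t₂, F s) / F t₂ ≤ (∫ s in Set.Ioi t₁, F s) / F t₁) ∧
    (LogConvexOn (Set.Ici 0) F →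
      ∀ t₁ t₂ : ℝ, 0 ≤ t₁ → t₁ ≤ t₂ → 0 < F t₁ → 0 < F t₂ →
        (∫ s in Set.Ioi t₁, F s) / F t₁ ≤ (∫ s in Set.Ioi t₂, F s) / F t₂) := by
  have h0 : ∀ x ≥ (0:ℝ), 0 ≤ F x := fun x hx => (hrange x hx).1
  constructor
  · intro hc t₁ t₂ ht₁ ht12 hF1 hF2
    have hI1 : IntegrableOn F (Set.Ioi t₁) := hint.mono_set (Set.Ioi_subset_Ioi ht₁)
    have hI2 : IntegrableOn F (Set.Ioi t₂) := hint.mono_set (Set.Ioi_subset_Ioi (ht₁.trans ht12))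
    obtain ⟨htr, hIg⟩ := mrl_translate F (t₂ := t₂) hI1
    rw [div_le_div_iff₀ hF2 hF1]
    have hpt : ∀ x ∈ Set.Ioi t₂, F x * F t₁ ≤ F (x + -(t₂ - t₁)) * F t₂ := by
      intro x hx
      rw [Set.mem_Ioi] at hx
      have := mrl_key_concave F h0 hc (a := t₁) (b := t₂) (s := x - t₂) ht₁ ht12 (by linarith)
      rw [show t₂ + (x - t₂) = x by ring, show t₁ + (x - t₂) = x + -(t₂ - t₁) by ring] at this
      exact this
    have hmain : (∫ x in Set.Ioi t₂, F x * F t₁) ≤ ∫ x in Set.Ioi t₂, F (x + -(t₂ - t₁)) * F t₂ :=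
      setIntegral_mono_on (hI2.mul_const _) (hIg.mul_const _) measurableSet_Ioi hpt
    rw [integral_mul_const, integral_mul_const, htr] at hmain
    exact hmain
  · intro hc t₁ t₂ ht₁ ht12 hF1 hF2
    have hI1 : IntegrableOn F (Set.Ioi t₁) := hint.mono_set (Set.Ioi_subset_Ioi ht₁)
    have hI2 : IntegrableOn F (Set.Ioi t₂) := hint.mono_set (Set.Ioi_subset_Ioi (ht₁.trans ht12))
    obtain ⟨htr, hIg⟩ := mrl_translate F (t₂ := t₂) hI1
    rw [div_le_div_iff₀ hF1 hF2]
    have hpt : ∀ x ∈ Set.Ioi t₂, F (x + -(t₂ - t₁)) * F t₂ ≤ F x * F t₁ := by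
      intro x hx
      rw [Set.mem_Ioi] at hx
      have := mrl_key_convex F h0 hmono hc (a := t₁) (b := t₂) (s := x - t₂) ht₁ ht12 (by linarith)
      rw [show t₂ + (x - t₂) = x by ring, show t₁ + (x - t₂) = x + -(t₂ - t₁) by ring] at this
      exact this
    have hmain : (∫ x in Set.Ioi t₂, F (x + -(t₂ - t₁)) * F t₂) ≤ ∫ x in Set.Ioi t₂, F x * F t₁ :=
      setIntegral_mono_on (hIg.mul_const _) (hI2.mul_const _) measurableSet_Ioi hpt
    rw [integral_mul_const, integral_mul_const, htr] at hmain
    exact hmain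
end

section
/- Let X be a random variable with Pr(X > 0) = 1 and tail distribution F̄(x) = Pr(X > x). If F̄ is log-concave on [0, ∞) and E[X²] < ∞, then E[X²] ≤ 2 (E[X])²; equivalently Var(X) ≤ (E[X])², so the coefficient of variation C_v = σ/μ satisfies C_v ≤ 1. If F̄ is log-convex on [0, ∞) and E[X²] < ∞, then E[X²] ≥ 2 (E[X])², so C_v ≥ 1. -/
open MeasureTheory ProbabilityTheory

/-!
Since `F̄(0) = 1`, log-concavity makes the tail submultiplicative, `F̄(s + u) ≤ F̄(s) F̄(u)`
(log-convexity gives the reverse inequality). By the layer-cake formula and the substitution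
`t = s + u`, `E[X²] = 2 ∫₀^∞ t F̄(t) dt = 2 ∫₀^∞ ∫₀^∞ F̄(s + u) du ds`, while
`(E[X])² = ∫₀^∞ ∫₀^∞ F̄(s) F̄(u) du ds`; comparing the integrands gives both inequalities.
-/

open Set
open scoped ENNReal

lemma exists_mem_Icc_mul_add_eq {s u : ℝ} (hs : 0 ≤ s) (hu : 0 ≤ u) :
    ∃ θ ∈ Icc (0 : ℝ) 1, θ * (s + u) = s ∧ (1 - θ) * (s + u) = u := by
  have hθs : s / (s + u) * (s + u) = s := div_mul_cancel_of_imp fun h => by linarith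
  refine ⟨s / (s + u), ⟨by positivity, div_le_one_of_le₀ (by linarith) (by linarith)⟩, hθs, ?_⟩
  rw [sub_mul, hθs]
  ring

namespace LogConcaveOn

variable {f : ℝ → ℝ}

lemma rpow_le_apply_mul_s10 (hf : LogConcaveOn (Ici 0) f) (h0 : f 0 = 1) {t θ : ℝ} (ht : 0 ≤ t)
    (hθ : θ ∈ Icc (0 : ℝ) 1) : f t ^ θ ≤ f (θ * t) := by
  simpa [h0] using hf (mem_Ici.2 ht) self_mem_Ici hθ

lemma apply_le_mul_apply (hf : LogConcaveOn (Ici 0) f) (hnn : ∀ x, 0 ≤ f x) (h0 : f 0 = 1)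
    {t θ : ℝ} (ht : 0 ≤ t) (hθ : θ ∈ Icc (0 : ℝ) 1) : f t ≤ f (θ * t) * f ((1 - θ) * t) :=
  calc f t = f t ^ θ * f t ^ (1 - θ) := by
        rw [← Real.rpow_add' (hnn t) (by simp), add_sub_cancel, Real.rpow_one]
    _ ≤ f (θ * t) * f ((1 - θ) * t) :=
        mul_le_mul (hf.rpow_le_apply_mul_s10 h0 ht hθ)
          (hf.rpow_le_apply_mul_s10 h0 ht (Icc.one_sub_mem hθ)) (Real.rpow_nonneg (hnn t) _) (hnn _)

lemma apply_add_le_mul (hf : LogConcaveOn (Ici 0) f) (hnn : ∀ x, 0 ≤ f x) (h0 : f 0 = 1)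
    {s u : ℝ} (hs : 0 ≤ s) (hu : 0 ≤ u) : f (s + u) ≤ f s * f u := by
  obtain ⟨θ, hθ, hθs, hθu⟩ := exists_mem_Icc_mul_add_eq hs hu
  simpa only [hθs, hθu] using hf.apply_le_mul_apply hnn h0 (add_nonneg hs hu) hθ

end LogConcaveOn

namespace LogConvexOn

variable {f : ℝ → ℝ}

lemma apply_mul_le_rpow_s10 (hf : LogConvexOn (Ici 0) f) (h0 : f 0 = 1) {t θ : ℝ} (ht : 0 ≤ t)
    (hθ : θ ∈ Icc (0 : ℝ) 1) : f (θ * t) ≤ f t ^ θ := by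
  simpa [h0] using hf (mem_Ici.2 ht) self_mem_Ici hθ

lemma mul_apply_le_apply (hf : LogConvexOn (Ici 0) f) (hnn : ∀ x, 0 ≤ f x) (h0 : f 0 = 1)
    {t θ : ℝ} (ht : 0 ≤ t) (hθ : θ ∈ Icc (0 : ℝ) 1) : f (θ * t) * f ((1 - θ) * t) ≤ f t :=
  calc f (θ * t) * f ((1 - θ) * t) ≤ f t ^ θ * f t ^ (1 - θ) :=
        mul_le_mul (hf.apply_mul_le_rpow_s10 h0 ht hθ)
          (hf.apply_mul_le_rpow_s10 h0 ht (Icc.one_sub_mem hθ)) (hnn _) (Real.rpow_nonneg (hnn t) _)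
    _ = f t := by rw [← Real.rpow_add' (hnn t) (by simp), add_sub_cancel, Real.rpow_one]

lemma mul_le_apply_add (hf : LogConvexOn (Ici 0) f) (hnn : ∀ x, 0 ≤ f x) (h0 : f 0 = 1)
    {s u : ℝ} (hs : 0 ≤ s) (hu : 0 ≤ u) : f s * f u ≤ f (s + u) := by
  obtain ⟨θ, hθ, hθs, hθu⟩ := exists_mem_Icc_mul_add_eq hs hu
  simpa only [hθs, hθu] using hf.mul_apply_le_apply hnn h0 (add_nonneg hs hu) hθ

end LogConvexOn

lemma lintegral_Ioi_lintegral_Ioi_add {F : ℝ → ℝ≥0∞} (hF : Measurable F) :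
    ∫⁻ s in Ioi 0, ∫⁻ u in Ioi 0, F (s + u) = ∫⁻ t in Ioi 0, F t * ENNReal.ofReal t := by
  have hshift (s : ℝ) : ∫⁻ u in Ioi 0, F (s + u) = ∫⁻ t in Ioi s, F t := by
    simpa using (measurePreserving_add_left volume s).setLIntegral_comp_preimage_emb
      (measurableEmbedding_addLeft s) F (Ioi s)
  calc ∫⁻ s in Ioi 0, ∫⁻ u in Ioi 0, F (s + u)
      = ∫⁻ s in Ioi 0, ∫⁻ t in Ioi 0, (Ioi s).indicator F t := by
        refine setLIntegral_congr_fun measurableSet_Ioi fun s hs => ?_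
        rw [hshift, setLIntegral_indicator measurableSet_Ioi,
          Ioi_inter_Ioi, sup_eq_left.2 (le_of_lt hs)]
    -- both integrands unfold to `if s < t then F t else 0`
    _ = ∫⁻ t in Ioi 0, ∫⁻ s in Ioi 0, (Iio t).indicator (fun _ => F t) s :=
        lintegral_lintegral_swap (Measurable.ite (measurableSet_lt measurable_fst
          measurable_snd) (hF.comp measurable_snd) measurable_const).aemeasurable
    _ = ∫⁻ t in Ioi 0, F t * ENNReal.ofReal t := by
        refine setLIntegral_congr_fun measurableSet_Ioi fun t _ => ?_
        rw [setLIntegral_indicator measurableSet_Iio, Iio_inter_Ioi, setLIntegral_const,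
          Real.volume_Ioo, sub_zero]

section TailMoments

variable {Ω : Type*} [MeasurableSpace Ω] {μ : Measure Ω} {X : Ω → ℝ}

lemma measurable_measure_lt (μ : Measure Ω) (X : Ω → ℝ) :
    Measurable fun t : ℝ => μ {ω | t < X ω} :=
  Antitone.measurable fun _ _ hab => measure_mono fun _ h => hab.trans_lt h

lemma lintegral_ofReal_sq_eq_two_mul_lintegral_measure_add_lt (hX0 : 0 ≤ᵐ[μ] X)
    (hXm : AEMeasurable X μ) :
    ∫⁻ ω, ENNReal.ofReal (X ω ^ 2) ∂μ =
      2 * ∫⁻ s in Ioi 0, ∫⁻ u in Ioi 0, μ {ω | s + u < X ω} := by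
  rw [lintegral_Ioi_lintegral_Ioi_add (measurable_measure_lt μ X)]
  have h := lintegral_rpow_eq_lintegral_meas_lt_mul μ hX0 hXm two_pos
  norm_num at h
  exact h

lemma sq_lintegral_ofReal_eq_lintegral_measure_lt_mul (hX0 : 0 ≤ᵐ[μ] X)
    (hXm : AEMeasurable X μ) :
    (∫⁻ ω, ENNReal.ofReal (X ω) ∂μ) ^ 2 =
      ∫⁻ s in Ioi 0, ∫⁻ u in Ioi 0, μ {ω | s < X ω} * μ {ω | u < X ω} := by
  simp_rw [lintegral_const_mul _ (measurable_measure_lt μ X),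
    lintegral_mul_const _ (measurable_measure_lt μ X), lintegral_eq_lintegral_meas_lt μ hX0 hXm, sq]

lemma integral_sq_le_two_mul_sq_integral (hX0 : 0 ≤ᵐ[μ] X) (hX : Integrable X μ)
    (htail : ∀ s > 0, ∀ u > 0, μ {ω | s + u < X ω} ≤ μ {ω | s < X ω} * μ {ω | u < X ω}) :
    ∫ ω, X ω ^ 2 ∂μ ≤ 2 * (∫ ω, X ω ∂μ) ^ 2 := by
  have hlin : ∫⁻ ω, ENNReal.ofReal (X ω ^ 2) ∂μ ≤ 2 * (∫⁻ ω, ENNReal.ofReal (X ω) ∂μ) ^ 2 := by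
    rw [lintegral_ofReal_sq_eq_two_mul_lintegral_measure_add_lt hX0 hX.aemeasurable,
      sq_lintegral_ofReal_eq_lintegral_measure_lt_mul hX0 hX.aemeasurable]
    gcongr 2 * ?_
    exact setLIntegral_mono' measurableSet_Ioi fun s hs =>
      setLIntegral_mono' measurableSet_Ioi fun u hu => htail s hs u hu
  rw [integral_eq_lintegral_of_nonneg_ae hX0 hX.aestronglyMeasurable,
    integral_eq_lintegral_of_nonneg_ae (by filter_upwards with ω using sq_nonneg _)
      (by fun_prop)]
  have hfin : 2 * (∫⁻ ω, ENNReal.ofReal (X ω) ∂μ) ^ 2 ≠ ∞ :=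
    ENNReal.mul_ne_top ENNReal.ofNat_ne_top (ENNReal.pow_ne_top hX.lintegral_lt_top.ne)
  simpa using ENNReal.toReal_mono hfin hlin

lemma two_mul_sq_integral_le_integral_sq (hX0 : 0 ≤ᵐ[μ] X) (hXm : AEMeasurable X μ)
    (hsq : Integrable (fun ω => X ω ^ 2) μ)
    (htail : ∀ s > 0, ∀ u > 0, μ {ω | s < X ω} * μ {ω | u < X ω} ≤ μ {ω | s + u < X ω}) :
    2 * (∫ ω, X ω ∂μ) ^ 2 ≤ ∫ ω, X ω ^ 2 ∂μ := by
  have hlin : 2 * (∫⁻ ω, ENNReal.ofReal (X ω) ∂μ) ^ 2 ≤ ∫⁻ ω, ENNReal.ofReal (X ω ^ 2) ∂μ := by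
    rw [lintegral_ofReal_sq_eq_two_mul_lintegral_measure_add_lt hX0 hXm,
      sq_lintegral_ofReal_eq_lintegral_measure_lt_mul hX0 hXm]
    gcongr 2 * ?_
    exact setLIntegral_mono' measurableSet_Ioi fun s hs =>
      setLIntegral_mono' measurableSet_Ioi fun u hu => htail s hs u hu
  rw [integral_eq_lintegral_of_nonneg_ae hX0 hXm.aestronglyMeasurable,
    integral_eq_lintegral_of_nonneg_ae (by filter_upwards with ω using sq_nonneg _)
      hsq.aestronglyMeasurable]
  simpa using ENNReal.toReal_mono hsq.lintegral_lt_top.ne hlin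

end TailMoments

/-- Coefficient of variation: for an a.s. positive random variable `X` with finite second
moment, a log-concave tail gives `E[X²] ≤ 2(E[X])²` (equivalently `Var(X) ≤ (E[X])²`,
i.e. `C_v ≤ 1`), and a log-convex tail gives `E[X²] ≥ 2(E[X])²` (i.e. `C_v ≥ 1`). -/
theorem coefficient_of_variation {Ω : Type*} [MeasureSpace Ω]
    [IsProbabilityMeasure (ℙ : Measure Ω)]
    (X : Ω → ℝ) (hmeas : Measurable X) (hpos : ℙ {ω | 0 < X ω} = 1)
    (hsq : Integrable (fun ω => X ω ^ 2) ℙ) :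
    (LogConcaveOn (Set.Ici 0) (fun x => (ℙ {ω | x < X ω}).toReal) →
      ∫ ω : Ω, X ω ^ 2 ∂(ℙ : Measure Ω) ≤ 2 * (∫ ω : Ω, X ω ∂(ℙ : Measure Ω)) ^ 2) ∧
    (LogConvexOn (Set.Ici 0) (fun x => (ℙ {ω | x < X ω}).toReal) →
      2 * (∫ ω : Ω, X ω ∂(ℙ : Measure Ω)) ^ 2 ≤ ∫ ω : Ω, X ω ^ 2 ∂(ℙ : Measure Ω)) := by
  set G := fun x => (ℙ {ω | x < X ω}).toReal
  have hG (t : ℝ) : ℙ {ω | t < X ω} = ENNReal.ofReal (G t) :=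
    (ENNReal.ofReal_toReal (measure_ne_top _ _)).symm
  have hG_nonneg (t : ℝ) : 0 ≤ G t := ENNReal.toReal_nonneg
  have hG0 : G 0 = 1 := by simp [G, hpos]
  have hX0 : 0 ≤ᵐ[ℙ] X := by
    have hXpos : ∀ᵐ ω ∂ℙ, 0 < X ω := by
      rw [ae_iff_measure_eq (measurableSet_lt measurable_const hmeas).nullMeasurableSet,
        hpos, measure_univ]
    exact hXpos.mono fun _ h => h.le
  have hX : Integrable X ℙ :=
    ((memLp_two_iff_integrable_sq hmeas.aestronglyMeasurable).2 hsq).integrable one_le_two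
  refine ⟨fun hcc => integral_sq_le_two_mul_sq_integral hX0 hX fun s hs u hu => ?_,
    fun hcv => two_mul_sq_integral_le_integral_sq hX0 hmeas.aemeasurable hsq fun s hs u hu => ?_⟩
  · rw [hG, hG, hG, ← ENNReal.ofReal_mul (hG_nonneg s)]
    exact ENNReal.ofReal_le_ofReal (hcc.apply_add_le_mul hG_nonneg hG0 hs.le hu.le)
  · rw [hG, hG, hG, ← ENNReal.ofReal_mul (hG_nonneg s)]
    exact ENNReal.ofReal_le_ofReal (hcv.mul_le_apply_add hG_nonneg hG0 hs.le hu.le)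
end

section
/- Let f : ℝ → [0, ∞) be an integrable function that is log-concave on ℝ, i.e. f(θx + (1−θ)y) ≥ f(x)^θ · f(y)^{1−θ} for all x, y ∈ ℝ and θ ∈ [0, 1]. Then the upper-tail function G(x) = ∫_x^∞ f(t) dt is log-concave on ℝ, i.e. G(θx + (1−θ)y) ≥ G(x)^θ · G(y)^{1−θ} for all x, y ∈ ℝ and θ ∈ [0, 1]. In particular, if a random variable X has a log-concave probability density f, then its tail distribution F̄_X(x) = Pr(X > x) is log-concave. -/
/-! The tail `G(x) = ∫ 1_{(x,∞)} f` is log-concave by the one-dimensional Prékopa–Leindler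
inequality, applied to `f` restricted to `(x,∞)`, `(y,∞)` and `(θx+(1-θ)y,∞)`: since
`θ(x,∞) + (1-θ)(y,∞) ⊆ (θx+(1-θ)y,∞)`, log-concavity of `f` gives its hypothesis.

Prékopa–Leindler itself comes from the Brunn–Minkowski inequality `|A| + |B| ≤ |A + B|` on `ℝ`
(translate `A` and `B` so that they touch at one point). After rescaling `g` to have the same
supremum as `f`, the superlevel sets satisfy `θ{f > u} + (1-θ){g > u} ⊆ {h > u}`; integrating over
`u` (layer cake) gives `θ∫f + (1-θ)∫g ≤ ∫h`, and weighted AM-GM gives the multiplicative form.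
Unbounded functions are handled by truncation and monotone convergence. -/

open MeasureTheory

open Set Pointwise Filter Topology Real

namespace Real

theorem volume_add_volume_le_volume_add_of_isCompact {K L : Set ℝ} (hK : IsCompact K)
    (hL : IsCompact L) (hK₀ : K.Nonempty) (hL₀ : L.Nonempty) :
    volume K + volume L ≤ volume (K + L) := by
  set a := sSup K
  set b := sInf L
  have ha : a ∈ K := hK.sSup_mem hK₀
  have hb : b ∈ L := hL.sInf_mem hL₀
  -- `b + K` and `a + L` lie in `K + L` and overlap only at `a + b`.
  have hsub : (b +ᵥ K) ∪ (a +ᵥ L) ⊆ K + L := by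
    rintro _ (⟨k, hk, rfl⟩ | ⟨l, hl, rfl⟩)
    · exact ⟨k, hk, b, hb, add_comm _ _⟩
    · exact ⟨a, ha, l, hl, rfl⟩
  have hinter : (b +ᵥ K) ∩ (a +ᵥ L) ⊆ {a + b} := by
    rintro _ ⟨⟨k, hk, rfl⟩, ⟨l, hl, hkl⟩⟩
    have := le_csSup hK.bddAbove hk
    have := csInf_le hL.bddBelow hl
    simp only [vadd_eq_add, mem_singleton_iff] at hkl ⊢
    linarith
  have hnull : volume ((b +ᵥ K) ∩ (a +ᵥ L)) = 0 :=
    measure_mono_null hinter (measure_singleton _)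
  calc volume K + volume L = volume (b +ᵥ K) + volume (a +ᵥ L) := by
        rw [measure_vadd, measure_vadd]
    _ = volume ((b +ᵥ K) ∪ (a +ᵥ L)) := by
        rw [← measure_union_add_inter _ (hL.vadd a).measurableSet, hnull, add_zero]
    _ ≤ volume (K + L) := measure_mono hsub

theorem volume_add_volume_le_volume_add {A B : Set ℝ} (hA : NullMeasurableSet A)
    (hB : NullMeasurableSet B) (hA₀ : A.Nonempty) (hB₀ : B.Nonempty) :
    volume A + volume B ≤ volume (A + B) := by
  obtain ⟨A', hA'A, hA', hAA'⟩ := hA.exists_measurable_subset_ae_eq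
  obtain ⟨B', hB'B, hB', hBB'⟩ := hB.exists_measurable_subset_ae_eq
  obtain ⟨a, ha⟩ := hA₀
  obtain ⟨b, hb⟩ := hB₀
  rw [← measure_congr hAA', ← measure_congr hBB', hA'.measure_eq_iSup_isCompact,
    hB'.measure_eq_iSup_isCompact]
  simp only [iSup_and']
  refine ENNReal.biSup_add_biSup_le' ⟨∅, empty_subset _, isCompact_empty⟩
    ⟨∅, empty_subset _, isCompact_empty⟩ fun K ⟨hKA', hK⟩ L ⟨hLB', hL⟩ ↦ ?_
  -- Adjoin a point so that the compact sets are nonempty.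
  calc volume K + volume L ≤ volume (insert a K) + volume (insert b L) :=
        add_le_add (measure_mono (subset_insert _ _)) (measure_mono (subset_insert _ _))
    _ ≤ volume (insert a K + insert b L) :=
        volume_add_volume_le_volume_add_of_isCompact (hK.insert a) (hL.insert b)
          (insert_nonempty _ _) (insert_nonempty _ _)
    _ ≤ volume (A + B) :=
        measure_mono (add_subset_add (insert_subset ha (hKA'.trans hA'A))
          (insert_subset hb (hLB'.trans hB'B)))

theorem ofReal_mul_volume_add_ofReal_mul_volume_le {A B : Set ℝ} (hA : NullMeasurableSet A)
    (hB : NullMeasurableSet B) (hA₀ : A.Nonempty) (hB₀ : B.Nonempty) {θ : ℝ}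
    (hθ : θ ∈ Icc (0 : ℝ) 1) :
    ENNReal.ofReal θ * volume A + ENNReal.ofReal (1 - θ) * volume B
      ≤ volume (θ • A + (1 - θ) • B) := by
  have h := volume_add_volume_le_volume_add (Measure.NullMeasurableSet.const_smul hA θ)
    (Measure.NullMeasurableSet.const_smul hB (1 - θ)) hA₀.smul_set hB₀.smul_set
  rwa [Measure.addHaar_smul_of_nonneg _ hθ.1,
    Measure.addHaar_smul_of_nonneg _ (sub_nonneg.2 hθ.2), Module.finrank_self, pow_one,
    pow_one] at h

theorem min_le_rpow_mul_rpow {a b θ : ℝ} (ha : 0 ≤ a) (hb : 0 ≤ b) (hθ : θ ∈ Icc (0 : ℝ) 1) :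
    min a b ≤ a ^ θ * b ^ (1 - θ) := by
  have hm : 0 ≤ min a b := le_min ha hb
  calc min a b = min a b ^ θ * min a b ^ (1 - θ) := by
        rw [← rpow_add' hm (by norm_num), add_sub_cancel, rpow_one]
    _ ≤ a ^ θ * b ^ (1 - θ) :=
        mul_le_mul (rpow_le_rpow hm (min_le_left a b) hθ.1)
          (rpow_le_rpow hm (min_le_right a b) (sub_nonneg.2 hθ.2)) (rpow_nonneg hm _)
          (rpow_nonneg ha _)

end Real

section

variable {α : Type*} [MeasurableSpace α] {μ : Measure α} {f : α → ℝ}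

theorem ofReal_integral_eq_lintegral_measure_lt (hf : Integrable f μ) (hf₀ : 0 ≤ᵐ[μ] f) :
    ENNReal.ofReal (∫ x, f x ∂μ) = ∫⁻ u in Ioi 0, μ {x | u < f x} := by
  rw [ofReal_integral_eq_lintegral_ofReal hf hf₀,
    lintegral_eq_lintegral_meas_lt μ hf₀ hf.aemeasurable]

theorem MeasureTheory.Integrable.min_const_of_nonneg (hf : Integrable f μ) (hf₀ : 0 ≤ f) {c : ℝ}
    (hc : 0 ≤ c) : Integrable (fun x ↦ min (f x) c) μ :=
  hf.mono' (hf.aestronglyMeasurable.inf aestronglyMeasurable_const) <| ae_of_all _ fun x ↦ by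
    rw [Real.norm_of_nonneg (le_min (hf₀ x) hc)]
    exact min_le_left _ _

theorem tendsto_integral_min_natCast (hf : Integrable f μ) (hf₀ : 0 ≤ f) :
    Tendsto (fun n : ℕ ↦ ∫ x, min (f x) n ∂μ) atTop (𝓝 (∫ x, f x ∂μ)) :=
  integral_tendsto_of_tendsto_of_monotone
    (fun n ↦ hf.min_const_of_nonneg hf₀ n.cast_nonneg) hf
    (ae_of_all _ fun _ _ _ hnm ↦ min_le_min_left _ (Nat.cast_le.2 hnm))
    (ae_of_all _ fun _ ↦ tendsto_atTop_of_eventually_const fun _ hn ↦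
      min_eq_left (Nat.ceil_le.1 hn))

end

section PrekopaLeindler

variable {f g h : ℝ → ℝ} {θ : ℝ}

theorem ofReal_mul_volume_lt_add_le_volume_lt {M : ℝ} (hθ : θ ∈ Icc (0 : ℝ) 1)
    (hf : AEMeasurable f) (hg : AEMeasurable g) (hfM : IsLUB (range f) M)
    (hgM : IsLUB (range g) M) (hh : ∀ x y, min (f x) (g y) ≤ h (θ * x + (1 - θ) * y)) (u : ℝ) :
    ENNReal.ofReal θ * volume {x | u < f x} + ENNReal.ofReal (1 - θ) * volume {y | u < g y}
      ≤ volume {z | u < h z} := by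
  rcases lt_or_ge u M with hu | hu
  · obtain ⟨_, ⟨x, rfl⟩, hx, -⟩ := hfM.exists_between hu
    obtain ⟨_, ⟨y, rfl⟩, hy, -⟩ := hgM.exists_between hu
    refine (Real.ofReal_mul_volume_add_ofReal_mul_volume_le (nullMeasurableSet_lt
      aemeasurable_const hf) (nullMeasurableSet_lt aemeasurable_const hg) ⟨x, hx⟩ ⟨y, hy⟩
      hθ).trans (measure_mono ?_)
    rintro _ ⟨_, ⟨s, hs, rfl⟩, _, ⟨t, ht, rfl⟩, rfl⟩
    exact (lt_min hs ht).trans_le (hh s t)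
  · have hf_empty : {x | u < f x} = ∅ :=
      eq_empty_of_forall_notMem fun x hx ↦ (hfM.1 ⟨x, rfl⟩).not_gt (hu.trans_lt hx)
    have hg_empty : {y | u < g y} = ∅ :=
      eq_empty_of_forall_notMem fun y hy ↦ (hgM.1 ⟨y, rfl⟩).not_gt (hu.trans_lt hy)
    simp [hf_empty, hg_empty]

theorem mul_integral_add_mul_integral_le {M : ℝ} (hθ : θ ∈ Icc (0 : ℝ) 1)
    (hf₀ : 0 ≤ f) (hg₀ : 0 ≤ g) (hfM : IsLUB (range f) M) (hgM : IsLUB (range g) M)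
    (hf : Integrable f) (hg : Integrable g) (hhi : Integrable h)
    (hh : ∀ x y, min (f x) (g y) ≤ h (θ * x + (1 - θ) * y)) :
    θ * (∫ x, f x) + (1 - θ) * ∫ x, g x ≤ ∫ x, h x := by
  have hh₀ : 0 ≤ h := fun z ↦ by
    have := (le_min (hf₀ z) (hg₀ z)).trans (hh z z)
    rwa [← add_mul, add_sub_cancel, one_mul] at this
  have hθ₁ : 0 ≤ 1 - θ := sub_nonneg.2 hθ.2
  have hF : 0 ≤ ∫ x, f x := integral_nonneg hf₀
  have hG : 0 ≤ ∫ x, g x := integral_nonneg hg₀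
  have hmeas {φ : ℝ → ℝ} : Measurable fun u ↦ volume {x | u < φ x} :=
    Antitone.measurable fun u v huv ↦ measure_mono fun x hx ↦ huv.trans_lt hx
  rw [← ENNReal.ofReal_le_ofReal_iff (integral_nonneg hh₀),
    ENNReal.ofReal_add (mul_nonneg hθ.1 hF) (mul_nonneg hθ₁ hG), ENNReal.ofReal_mul hθ.1,
    ENNReal.ofReal_mul hθ₁, ofReal_integral_eq_lintegral_measure_lt hf (ae_of_all _ hf₀),
    ofReal_integral_eq_lintegral_measure_lt hg (ae_of_all _ hg₀),
    ofReal_integral_eq_lintegral_measure_lt hhi (ae_of_all _ hh₀),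
    ← lintegral_const_mul _ hmeas, ← lintegral_const_mul _ hmeas,
    ← lintegral_add_left (hmeas.const_mul _)]
  exact setLIntegral_mono hmeas fun u _ ↦ ofReal_mul_volume_lt_add_le_volume_lt hθ
    hf.aemeasurable hg.aemeasurable hfM hgM hh u

theorem prekopa_leindler_of_bddAbove (hθ : θ ∈ Ioo (0 : ℝ) 1) (hf₀ : 0 ≤ f) (hg₀ : 0 ≤ g)
    (hfb : BddAbove (range f)) (hgb : BddAbove (range g)) (hf : Integrable f)
    (hg : Integrable g) (hhi : Integrable h)
    (hh : ∀ x y, f x ^ θ * g y ^ (1 - θ) ≤ h (θ * x + (1 - θ) * y)) :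
    (∫ x, f x) ^ θ * (∫ x, g x) ^ (1 - θ) ≤ ∫ x, h x := by
  have hθ₁ : 0 < 1 - θ := sub_pos.2 hθ.2
  have hh₀ : 0 ≤ ∫ x, h x := integral_nonneg fun z ↦ by
    have := (mul_nonneg (rpow_nonneg (hf₀ z) θ) (rpow_nonneg (hg₀ z) (1 - θ))).trans (hh z z)
    rwa [← add_mul, add_sub_cancel, one_mul] at this
  set a := ⨆ x, f x
  set b := ⨆ y, g y
  have ha : IsLUB (range f) a := isLUB_ciSup hfb
  have hb : IsLUB (range g) b := isLUB_ciSup hgb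
  have hF : 0 ≤ ∫ x, f x := integral_nonneg hf₀
  have hG : 0 ≤ ∫ y, g y := integral_nonneg hg₀
  have ha₀ : 0 ≤ a := (hf₀ 0).trans (ha.1 ⟨0, rfl⟩)
  have hb₀ : 0 ≤ b := (hg₀ 0).trans (hb.1 ⟨0, rfl⟩)
  rcases ha₀.eq_or_lt with ha₀ | ha₀
  · have : f = 0 := funext fun x ↦ le_antisymm ((ha.1 ⟨x, rfl⟩).trans ha₀.ge) (hf₀ x)
    simpa [this, zero_rpow hθ.1.ne'] using hh₀
  rcases hb₀.eq_or_lt with hb₀ | hb₀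
  · have : g = 0 := funext fun y ↦ le_antisymm ((hb.1 ⟨y, rfl⟩).trans hb₀.ge) (hg₀ y)
    simpa [this, zero_rpow hθ₁.ne'] using hh₀
  set k := a / b
  have hk : 0 < k := div_pos ha₀ hb₀
  have hkg : IsLUB (range fun y ↦ k * g y) a := by
    have := hb.mul_left hk.le
    rwa [← range_comp, div_mul_cancel₀ _ hb₀.ne'] at this
  have hadd := mul_integral_add_mul_integral_le (g := fun y ↦ k * g y)
    (h := fun z ↦ k ^ (1 - θ) * h z) (Ioo_subset_Icc_self hθ) hf₀
    (fun y ↦ mul_nonneg hk.le (hg₀ y)) ha hkg hf (hg.const_mul k) (hhi.const_mul _)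
    fun x y ↦ calc
      min (f x) (k * g y) ≤ f x ^ θ * (k * g y) ^ (1 - θ) :=
        min_le_rpow_mul_rpow (hf₀ x) (mul_nonneg hk.le (hg₀ y)) (Ioo_subset_Icc_self hθ)
      _ = k ^ (1 - θ) * (f x ^ θ * g y ^ (1 - θ)) := by rw [mul_rpow hk.le (hg₀ y)]; ring
      _ ≤ k ^ (1 - θ) * h (θ * x + (1 - θ) * y) := by gcongr; exact hh x y
  rw [integral_const_mul, integral_const_mul] at hadd
  have amgm := geom_mean_le_arith_mean2_weighted hθ.1.le hθ₁.le hF (mul_nonneg hk.le hG)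
    (add_sub_cancel _ _)
  refine le_of_mul_le_mul_left ?_ (rpow_pos_of_pos hk (1 - θ))
  calc k ^ (1 - θ) * ((∫ x, f x) ^ θ * (∫ x, g x) ^ (1 - θ))
      = (∫ x, f x) ^ θ * (k * ∫ x, g x) ^ (1 - θ) := by
        rw [mul_rpow hk.le hG]; ring
    _ ≤ k ^ (1 - θ) * ∫ x, h x := amgm.trans hadd

theorem prekopa_leindler (hθ : θ ∈ Ioo (0 : ℝ) 1) (hf₀ : 0 ≤ f) (hg₀ : 0 ≤ g)
    (hf : Integrable f) (hg : Integrable g) (hhi : Integrable h)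
    (hh : ∀ x y, f x ^ θ * g y ^ (1 - θ) ≤ h (θ * x + (1 - θ) * y)) :
    (∫ x, f x) ^ θ * (∫ x, g x) ^ (1 - θ) ≤ ∫ x, h x := by
  have hθ₁ : 0 < 1 - θ := sub_pos.2 hθ.2
  refine le_of_tendsto' (((tendsto_integral_min_natCast hf hf₀).rpow_const (.inr hθ.1.le)).mul
    ((tendsto_integral_min_natCast hg hg₀).rpow_const (.inr hθ₁.le))) fun n ↦ ?_
  have hn : (0 : ℝ) ≤ n := n.cast_nonneg
  refine prekopa_leindler_of_bddAbove hθ (fun x ↦ le_min (hf₀ x) hn) (fun y ↦ le_min (hg₀ y) hn)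
    ⟨n, forall_mem_range.2 fun _ ↦ min_le_right _ _⟩
    ⟨n, forall_mem_range.2 fun _ ↦ min_le_right _ _⟩
    (hf.min_const_of_nonneg hf₀ hn) (hg.min_const_of_nonneg hg₀ hn) hhi fun x y ↦ ?_
  refine (mul_le_mul ?_ ?_ (rpow_nonneg (le_min (hg₀ y) hn) _) (rpow_nonneg (hf₀ x) _)).trans
    (hh x y)
  · exact rpow_le_rpow (le_min (hf₀ x) hn) (min_le_left _ _) hθ.1.le
  · exact rpow_le_rpow (le_min (hg₀ y) hn) (min_le_left _ _) hθ₁.le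

end PrekopaLeindler

theorem LogConcaveOn.indicator_Ioi_rpow_mul_rpow_le {f : ℝ → ℝ} (hlc : LogConcaveOn univ f)
    (hf₀ : 0 ≤ f) {θ : ℝ} (hθ : θ ∈ Ioo (0 : ℝ) 1) (a b x y : ℝ) :
    (Ioi a).indicator f x ^ θ * (Ioi b).indicator f y ^ (1 - θ)
      ≤ (Ioi (θ * a + (1 - θ) * b)).indicator f (θ * x + (1 - θ) * y) := by
  have hθ₁ : 0 < 1 - θ := sub_pos.2 hθ.2
  have hind₀ := indicator_nonneg (s := Ioi (θ * a + (1 - θ) * b)) fun z _ ↦ hf₀ z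
  by_cases hx : x ∈ Ioi a
  · by_cases hy : y ∈ Ioi b
    · have hxy : θ * x + (1 - θ) * y ∈ Ioi (θ * a + (1 - θ) * b) := by
        have := mul_lt_mul_of_pos_left (mem_Ioi.1 hx) hθ.1
        have := mul_lt_mul_of_pos_left (mem_Ioi.1 hy) hθ₁
        exact mem_Ioi.2 (by linarith)
      rw [indicator_of_mem hx, indicator_of_mem hy, indicator_of_mem hxy]
      exact hlc trivial trivial (Ioo_subset_Icc_self hθ)
    · rw [indicator_of_notMem hy, zero_rpow hθ₁.ne', mul_zero]
      exact hind₀ _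
  · rw [indicator_of_notMem hx, zero_rpow hθ.1.ne', zero_mul]
    exact hind₀ _

/-- If an integrable nonnegative function `f` (e.g. a probability density) is log-concave
on `ℝ`, then its upper-tail function `G(x) = ∫_x^∞ f(t) dt` is log-concave on `ℝ`.
In particular the tail distribution of a random variable with log-concave density is
log-concave. -/
theorem tail_of_logconcave_density (f : ℝ → ℝ)
    (hnn : ∀ x, 0 ≤ f x) (hint : Integrable f)
    (hlc : LogConcaveOn Set.univ f) :
    LogConcaveOn Set.univ (fun x => ∫ t in Set.Ioi x, f t) := by
  intro x _ y _ θ hθ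
  rcases hθ.1.eq_or_lt with rfl | hθ₀
  · simp
  rcases hθ.2.eq_or_lt with rfl | hθ₁
  · simp
  have hind₀ (a : ℝ) : 0 ≤ (Ioi a).indicator f := indicator_nonneg fun t _ ↦ hnn t
  have hind (a : ℝ) : Integrable ((Ioi a).indicator f) := hint.indicator measurableSet_Ioi
  simpa only [integral_indicator measurableSet_Ioi] using
    prekopa_leindler ⟨hθ₀, hθ₁⟩ (hind₀ x) (hind₀ y) (hind x) (hind y) (hind _)
      (hlc.indicator_Ioi_rpow_mul_rpow_le hnn ⟨hθ₀, hθ₁⟩ x y)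
end
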